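/- arXiv:0710.5934 — 5 statements merged into one kernel-verified Lean document; each statement's English description precedes it below -/
import Mathlib

section
/- Let N ∈ {3,4,5}, let W be the Aubin–Talenti function, set C_N := ‖W‖_{L^{2N/(N−2)}}/‖∇W‖_{L²}, and assume the sharp Sobolev inequality: for every u in the homogeneous Sobolev space Ḣ¹(ℝ^N), ‖u‖_{L^{2N/(N−2)}} ≤ C_N ‖∇u‖_{L²}. Then for every v ∈ Ḣ¹(ℝ^N) satisfying ‖∇v‖_{L²}² ≤ ‖∇W‖_{L²}² and E(v,0) ≤ E(W,0), one has ‖∇v‖_{L²}² / ‖∇W‖_{L²}² ≤ E(v,0) / E(W,0). -/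
open MeasureTheory

/-- The Aubin-Talenti function `W(x) = (1 + |x|^2/(N(N-2)))^{-(N-2)/2}` on `R^N`. -/
noncomputable def W (N : ℕ) (x : EuclideanSpace ℝ (Fin N)) : ℝ :=
  (1 + ‖x‖ ^ 2 / ((N : ℝ) * ((N : ℝ) - 2))) ^ (-(((N : ℝ) - 2) / 2))

/-- The energy functional of the energy-critical wave equation. -/
noncomputable def energy (N : ℕ) (v g : EuclideanSpace ℝ (Fin N) → ℝ) : ℝ :=
  (1 / 2) * (∫ x, (g x) ^ 2) + (1 / 2) * (∫ x : EuclideanSpace ℝ (Fin N), ‖gradient v x‖ ^ 2)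
    - (((N : ℝ) - 2) / (2 * (N : ℝ))) * ∫ x, |v x| ^ ((2 * (N : ℝ)) / ((N : ℝ) - 2))

/-- The best Sobolev constant `C_N = ‖W‖_{L^{2N/(N-2)}} / ‖∇W‖_{L²}`. -/
noncomputable def CN (N : ℕ) : ℝ :=
  (∫ x, |W N x| ^ ((2 * (N : ℝ)) / ((N : ℝ) - 2))) ^ (((N : ℝ) - 2) / (2 * (N : ℝ))) /
    (∫ x : EuclideanSpace ℝ (Fin N), ‖gradient (W N) x‖ ^ 2) ^ ((1 : ℝ) / 2)

/-- Membership in the homogeneous Sobolev space `Ḣ¹(ℝ^N)`: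
`f ∈ L^{2N/(N-2)}` and its gradient is in `L²`. -/
def memH1 (N : ℕ) (f : EuclideanSpace ℝ (Fin N) → ℝ) : Prop :=
  Differentiable ℝ f ∧
    MemLp f (ENNReal.ofReal ((2 * (N : ℝ)) / ((N : ℝ) - 2))) volume ∧
    MemLp (gradient f) 2 volume

lemma cpos {N : ℕ} (hN : 3 ≤ N) : 0 < (N : ℝ) * ((N : ℝ) - 2) := by
  have : (3:ℝ) ≤ (N:ℝ) := by exact_mod_cast hN
  nlinarith

lemma base_pos {N : ℕ} (hN : 3 ≤ N) (x : EuclideanSpace ℝ (Fin N)) :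
    0 < 1 + ‖x‖ ^ 2 / ((N : ℝ) * ((N : ℝ) - 2)) := by
  have h := cpos hN
  positivity

lemma W_hasGradient {N : ℕ} (hN : 3 ≤ N) (x : EuclideanSpace ℝ (Fin N)) :
    HasGradientAt (W N)
      ((-(1 / (N:ℝ)) * (1 + ‖x‖ ^ 2 / ((N : ℝ) * ((N : ℝ) - 2))) ^ (-(N:ℝ)/2)) • x) x := by
  set c : ℝ := (N : ℝ) * ((N : ℝ) - 2) with hc
  have hc0 : 0 < c := cpos hN
  have hb : 0 < 1 + ‖x‖ ^ 2 / c := base_pos hN x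
  set p : ℝ := -(((N : ℝ) - 2) / 2) with hp
  -- inner function u ↦ 1 + u / c at u₀ = ‖x‖^2
  have hinner : HasDerivAt (fun u : ℝ => 1 + u / c) (1 / c) (‖x‖ ^ 2) := by
    simpa using ((hasDerivAt_id (‖x‖^2)).div_const c).const_add 1
  have houter : HasDerivAt (fun b : ℝ => b ^ p)
      (p * (1 + ‖x‖ ^ 2 / c) ^ (p - 1)) (1 + ‖x‖ ^ 2 / c) :=
    Real.hasDerivAt_rpow_const (Or.inl hb.ne')
  have hcomp : HasDerivAt (fun u : ℝ => (1 + u / c) ^ p)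
      (p * (1 + ‖x‖ ^ 2 / c) ^ (p - 1) * (1 / c)) (‖x‖ ^ 2) := by
    have := HasDerivAt.comp (‖x‖ ^ 2) houter hinner
    exact this
  have hnormsq : HasFDerivAt (fun y : EuclideanSpace ℝ (Fin N) => ‖y‖ ^ 2)
      (2 • (innerSL ℝ x)) x := (hasStrictFDerivAt_norm_sq x).hasFDerivAt
  have hW : HasFDerivAt (W N)
      ((p * (1 + ‖x‖ ^ 2 / c) ^ (p - 1) * (1 / c)) • (2 • (innerSL ℝ x))) x := by
    have := hcomp.comp_hasFDerivAt x hnormsq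
    exact this
  have key : ((p * (1 + ‖x‖ ^ 2 / c) ^ (p - 1) * (1 / c)) • (2 • (innerSL ℝ x)))
      = (InnerProductSpace.toDual ℝ (EuclideanSpace ℝ (Fin N)))
          ((-(1 / (N:ℝ)) * (1 + ‖x‖ ^ 2 / c) ^ (-(N:ℝ)/2)) • x) := by
    have hN2 : ((N:ℝ) - 2) ≠ 0 := by
      have : (3:ℝ) ≤ (N:ℝ) := by exact_mod_cast hN
      linarith
    have hNne : (N:ℝ) ≠ 0 := by positivity
    have hexp : p - 1 = -(N:ℝ)/2 := by rw [hp]; ring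
    ext y
    simp only [ContinuousLinearMap.smul_apply, ContinuousLinearMap.coe_smul',
      Pi.smul_apply, innerSL_apply_apply, InnerProductSpace.toDual_apply_apply, real_inner_smul_left,
      smul_eq_mul]
    rw [hexp]
    field_simp
    ring
  rw [key] at hW
  have := hW.hasGradientAt
  simpa using this

lemma rpow_negN {N : ℕ} (hN : 3 ≤ N) (x : EuclideanSpace ℝ (Fin N)) :
    (1 + ‖x‖ ^ 2 / ((N : ℝ) * ((N : ℝ) - 2))) ^ (-(N:ℝ)) =
      ((1 + ‖x‖ ^ 2 / ((N : ℝ) * ((N : ℝ) - 2))) ^ (N:ℕ))⁻¹ := by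
  have hb := base_pos hN x
  rw [Real.rpow_neg hb.le, Real.rpow_natCast]

lemma norm_gradW {N : ℕ} (hN : 3 ≤ N) (x : EuclideanSpace ℝ (Fin N)) :
    ‖gradient (W N) x‖ ^ 2 =
      (1 / (N:ℝ)^2) * ‖x‖ ^ 2 / ((1 + ‖x‖ ^ 2 / ((N : ℝ) * ((N : ℝ) - 2))) ^ (N:ℕ)) := by
  rw [(W_hasGradient hN x).gradient]
  set b : ℝ := 1 + ‖x‖ ^ 2 / ((N : ℝ) * ((N : ℝ) - 2)) with hbdef
  have hb : 0 < b := base_pos hN x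
  rw [norm_smul]
  have h1 : ‖(-(1 / (N:ℝ)) * b ^ (-(N:ℝ)/2))‖ = (1 / (N:ℝ)) * b ^ (-(N:ℝ)/2) := by
    rw [Real.norm_eq_abs, abs_mul, abs_neg, abs_of_nonneg (by positivity : (0:ℝ) ≤ 1/(N:ℝ)),
      abs_of_nonneg (Real.rpow_nonneg hb.le _)]
  rw [h1, mul_pow, mul_pow]
  have h2 : (b ^ (-(N:ℝ)/2)) ^ 2 = (b ^ (N:ℕ))⁻¹ := by
    rw [← Real.rpow_natCast (b ^ (-(N:ℝ)/2)) 2, ← Real.rpow_mul hb.le]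
    have : -(N:ℝ)/2 * (2:ℕ) = -(N:ℝ) := by push_cast; ring
    rw [this, Real.rpow_neg hb.le, Real.rpow_natCast]
  rw [h2]
  field_simp

lemma W_pos {N : ℕ} (hN : 3 ≤ N) (x : EuclideanSpace ℝ (Fin N)) : 0 < W N x :=
  Real.rpow_pos_of_pos (base_pos hN x) _

lemma absW_pow {N : ℕ} (hN : 3 ≤ N) (x : EuclideanSpace ℝ (Fin N)) :
    |W N x| ^ ((2 * (N : ℝ)) / ((N : ℝ) - 2)) =
      ((1 + ‖x‖ ^ 2 / ((N : ℝ) * ((N : ℝ) - 2))) ^ (N:ℕ))⁻¹ := by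
  have hb := base_pos hN x
  have hN2 : ((N:ℝ) - 2) ≠ 0 := by
    have : (3:ℝ) ≤ (N:ℝ) := by exact_mod_cast hN
    linarith
  rw [abs_of_pos (W_pos hN x), W, ← Real.rpow_natCast _ N, ← Real.rpow_neg hb.le,
    ← Real.rpow_mul hb.le]
  congr 1
  field_simp

open Set in
lemma int_aux (n : ℕ) {c : ℝ} (hc : 0 < c) (a : ℕ) (ha : (a:ℝ) < 2*(n:ℝ) - 1) :
    IntegrableOn (fun r : ℝ => r ^ a / (1 + r ^ 2 / c) ^ n) (Ioi 0) := by
  have hden : ∀ r : ℝ, (0:ℝ) < (1 + r ^ 2 / c) ^ n := by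
    intro r; positivity
  have hcont : Continuous (fun r : ℝ => r ^ a / (1 + r ^ 2 / c) ^ n) := by
    apply Continuous.div (by continuity) (by continuity)
    intro r; exact (hden r).ne'
  have h1 : IntegrableOn (fun r : ℝ => r ^ a / (1 + r ^ 2 / c) ^ n) (Ioc 0 1) := by
    exact (hcont.continuousOn.integrableOn_compact (isCompact_Icc (a := (0:ℝ)) (b := 1))).mono_set
      Ioc_subset_Icc_self
  have h2 : IntegrableOn (fun r : ℝ => r ^ a / (1 + r ^ 2 / c) ^ n) (Ioi 1) := by
    have hint : IntegrableOn (fun r : ℝ => c ^ n * r ^ ((a:ℝ) - 2*(n:ℝ))) (Ioi 1) := by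
      exact (integrableOn_Ioi_rpow_of_lt (by linarith) one_pos).const_mul _
    apply Integrable.mono' hint (hcont.aestronglyMeasurable.restrict)
    filter_upwards [ae_restrict_mem measurableSet_Ioi] with r hr
    have hr1 : (1:ℝ) < r := hr
    have hr0 : (0:ℝ) < r := lt_trans one_pos hr1
    rw [Real.norm_eq_abs, abs_of_nonneg (by positivity)]
    have hrw : c ^ n * r ^ ((a:ℝ) - 2*(n:ℝ)) = c ^ n * r ^ a / (r ^ 2) ^ n := by
      rw [Real.rpow_sub hr0, Real.rpow_natCast]
      have : r ^ (2*(n:ℝ)) = (r ^ 2) ^ n := by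
        rw [← Real.rpow_natCast (r ^ 2) n, ← Real.rpow_natCast r 2, ← Real.rpow_mul hr0.le]
        norm_num [mul_comm]
      rw [this]; ring
    rw [hrw]
    rw [div_le_div_iff₀ (hden r) (by positivity)]
    have hkey : (r ^ 2) ^ n ≤ (c * (1 + r ^ 2 / c)) ^ n := by
      apply pow_le_pow_left₀ (by positivity)
      have : c * (1 + r ^ 2 / c) = c + r ^ 2 := by field_simp
      rw [this]; linarith
    calc r ^ a * (r ^ 2) ^ n ≤ r ^ a * (c * (1 + r ^ 2 / c)) ^ n := by
            exact mul_le_mul_of_nonneg_left hkey (by positivity)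
      _ = c ^ n * r ^ a * (1 + r ^ 2 / c) ^ n := by rw [mul_pow]; ring
  have := h1.union h2
  rwa [Ioc_union_Ioi_eq_Ioi (zero_le_one)] at this

open Set in
lemma D_pos (n : ℕ) (hn : 3 ≤ n) {c : ℝ} (hc : 0 < c) :
    0 < ∫ r in Ioi (0:ℝ), (r ^ 2 / c - 1) * r ^ (n - 1) / (1 + r ^ 2 / c) ^ n := by
  obtain ⟨M, rfl⟩ : ∃ M, n = M + 3 := ⟨n - 3, by omega⟩
  have hsub : M + 3 - 1 = M + 2 := by omega
  rw [hsub]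
  have hc' : c ≠ 0 := hc.ne'
  set g : ℝ → ℝ := fun r => (r ^ 2 / c - 1) * r ^ (M + 2) / (1 + r ^ 2 / c) ^ (M + 3) with hg
  set G : ℝ → ℝ := fun r => (c - r ^ 2) * r ^ M / (1 + r ^ 2 / c) ^ (M + 3) with hG
  have hden : ∀ r : ℝ, (0:ℝ) < (1 + r ^ 2 / c) ^ (M + 3) := fun r => by positivity
  -- integrability
  have hint : ∀ a : ℕ, (a:ℝ) < 2*((M:ℝ)+3) - 1 →
      IntegrableOn (fun r : ℝ => r ^ a / (1 + r ^ 2 / c) ^ (M + 3)) (Ioi 0) := by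
    intro a ha
    have := int_aux (M + 3) hc a (by push_cast; linarith)
    simpa using this
  have hg_int : IntegrableOn g (Ioi 0) := by
    have hgeq : g = fun r => (1/c) * (r ^ (M + 4) / (1 + r ^ 2 / c) ^ (M + 3))
        - r ^ (M + 2) / (1 + r ^ 2 / c) ^ (M + 3) := by
      funext r
      have := (hden r).ne'
      simp only [hg]; field_simp
      ring
    rw [hgeq]
    exact ((hint (M+4) (by push_cast; linarith)).const_mul _).sub (hint (M+2) (by push_cast; linarith))
  have hG_int : IntegrableOn G (Ioi 0) := by
    have hGeq : G = fun r => c * (r ^ M / (1 + r ^ 2 / c) ^ (M + 3))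
        - r ^ (M + 2) / (1 + r ^ 2 / c) ^ (M + 3) := by
      funext r
      have := (hden r).ne'
      simp only [hG]; field_simp
      ring
    rw [hGeq]
    exact ((hint M (by push_cast; linarith)).const_mul _).sub (hint (M+2) (by push_cast; linarith))
  -- substitution r ↦ c / r : ∫ g = ∫ G
  have hsubst : ∫ r in Ioi (0:ℝ), g r = ∫ r in Ioi (0:ℝ), G r := by
    have s1 : (∫ x in Ioi (0:ℝ), g (c * x)) = c⁻¹ • ∫ x in Ioi (0:ℝ), g x := by
      have := integral_comp_mul_left_Ioi g 0 hc
      simpa using this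
    set gc : ℝ → ℝ := fun t => g (c * t) with hgc
    have s2 : (∫ x in Ioi (0:ℝ), (|(-1:ℝ)| * x ^ ((-1:ℝ) - 1)) • gc (x ^ (-1:ℝ)))
        = ∫ y in Ioi (0:ℝ), gc y := integral_comp_rpow_Ioi (p := -1) gc (by norm_num)
    have s3 : (∫ x in Ioi (0:ℝ), (|(-1:ℝ)| * x ^ ((-1:ℝ) - 1)) • gc (x ^ (-1:ℝ)))
        = ∫ x in Ioi (0:ℝ), c⁻¹ * G x := by
      apply setIntegral_congr_fun measurableSet_Ioi
      intro x hx
      have hx0 : (0:ℝ) < x := hx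
      have hx' : x ≠ 0 := hx0.ne'
      have e1 : x ^ ((-1:ℝ) - 1) = (x ^ 2)⁻¹ := by
        rw [show ((-1:ℝ) - 1) = -(2:ℕ) by norm_num, Real.rpow_neg hx0.le, Real.rpow_natCast]
      have e2 : x ^ (-1:ℝ) = x⁻¹ := Real.rpow_neg_one x
      dsimp only
      rw [e1, e2]
      simp only [hgc, smul_eq_mul, abs_neg, abs_one, one_mul, hg, hG]
      have e3 : 1 + (c * x⁻¹) ^ 2 / c = (x ^ 2 + c) / x ^ 2 := by field_simp
      have e4 : 1 + x ^ 2 / c = (x ^ 2 + c) / c := by field_simp; ring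
      rw [e3, e4, div_pow, div_pow]
      have hxc : (0:ℝ) < x ^ 2 + c := by positivity
      field_simp
      rw [div_pow]
      field_simp
      ring
    -- combine
    have s1' : (∫ x in Ioi (0:ℝ), gc x) = c⁻¹ • ∫ x in Ioi (0:ℝ), g x := s1
    have : ∫ x in Ioi (0:ℝ), g x = c * ∫ x in Ioi (0:ℝ), c⁻¹ * G x := by
      rw [← s3, s2, s1', smul_eq_mul, ← mul_assoc, mul_inv_cancel₀ hc', one_mul]
    rw [this, ← integral_const_mul]
    apply setIntegral_congr_fun measurableSet_Ioi
    intro x _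
    field_simp
  -- sum is positive
  set P : ℝ → ℝ := fun r => (r ^ 2 - c) ^ 2 * r ^ M / (c * (1 + r ^ 2 / c) ^ (M + 3)) with hP
  have hsum : ∀ r : ℝ, g r + G r = P r := by
    intro r
    have := (hden r).ne'
    simp only [hg, hG, hP]
    field_simp
    ring
  have hP_int : IntegrableOn P (Ioi 0) := by
    have : P = fun r => (g r + G r) := by funext r; rw [hsum]
    rw [this]
    exact hg_int.add hG_int
  have hP_nonneg : 0 ≤ᶠ[ae (volume.restrict (Ioi (0:ℝ)))] P := by
    filter_upwards [ae_restrict_mem measurableSet_Ioi] with r hr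
    have hr0 : (0:ℝ) < r := hr
    simp only [hP]
    positivity
  have hsupp : Ioo 0 (Real.sqrt c) ⊆ Function.support P ∩ Ioi 0 := by
    intro r hr
    have hr0 : 0 < r := hr.1
    have hrc : r ^ 2 < c := by
      have := hr.2
      nlinarith [Real.sq_sqrt hc.le, Real.sqrt_nonneg c]
    have h1 : (0:ℝ) < (r ^ 2 - c) ^ 2 := by nlinarith
    refine ⟨?_, hr0⟩
    simp only [hP, Function.mem_support]
    have hpos : 0 < (r ^ 2 - c) ^ 2 * r ^ M / (c * (1 + r ^ 2 / c) ^ (M + 3)) :=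
      div_pos (mul_pos h1 (pow_pos hr0 M)) (by positivity)
    exact ne_of_gt hpos
  have hP_pos : 0 < ∫ r in Ioi (0:ℝ), P r := by
    rw [setIntegral_pos_iff_support_of_nonneg_ae hP_nonneg hP_int]
    apply lt_of_lt_of_le _ (measure_mono hsupp)
    rw [Real.volume_Ioo]
    simp [Real.sqrt_pos.mpr hc]
  have h2 : (∫ r in Ioi (0:ℝ), g r) + ∫ r in Ioi (0:ℝ), G r = ∫ r in Ioi (0:ℝ), P r := by
    rw [← integral_add hg_int hG_int]
    exact setIntegral_congr_fun measurableSet_Ioi (fun r _ => hsum r)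
  have : 2 * ∫ r in Ioi (0:ℝ), g r = ∫ r in Ioi (0:ℝ), P r := by
    rw [← h2, hsubst]; ring
  linarith

open Set in
lemma radial {N : ℕ} (hN : 3 ≤ N) (f : ℝ → ℝ) :
    (∫ x : EuclideanSpace ℝ (Fin N), f ‖x‖) =
      ((N : ℝ) * (volume (Metric.ball (0 : EuclideanSpace ℝ (Fin N)) 1)).toReal) *
        ∫ r in Ioi (0:ℝ), r ^ (N - 1) * f r := by
  haveI : Nonempty (Fin N) := ⟨⟨0, by omega⟩⟩
  haveI : Nontrivial (EuclideanSpace ℝ (Fin N)) := by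
    refine ⟨0, EuclideanSpace.single ⟨0, by omega⟩ 1, ?_⟩
    intro h
    have := congrArg (fun v => v (⟨0, by omega⟩ : Fin N)) h.symm
    simp [EuclideanSpace.single] at this
  have hdim : Module.finrank ℝ (EuclideanSpace ℝ (Fin N)) = N := by
    simp [finrank_euclideanSpace_fin]
  have h := integral_fun_norm_addHaar (volume : Measure (EuclideanSpace ℝ (Fin N))) f
  rw [hdim] at h
  rw [h, nsmul_eq_mul, smul_eq_mul, ← mul_assoc]
  congr 1

open Set in
lemma EW_pos {N : ℕ} (hN : 3 ≤ N) : 0 < energy N (W N) (fun _ => 0) := by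
  have hc : 0 < (N : ℝ) * ((N : ℝ) - 2) := cpos hN
  set c : ℝ := (N : ℝ) * ((N : ℝ) - 2) with hcdef
  have hN3 : (3:ℝ) ≤ (N:ℝ) := by exact_mod_cast hN
  have hNpos : (0:ℝ) < N := by linarith
  -- rewrite the energy
  have hE : energy N (W N) (fun _ => 0) =
      (1/2) * (∫ x : EuclideanSpace ℝ (Fin N), ‖gradient (W N) x‖ ^ 2)
        - (((N : ℝ) - 2) / (2 * (N : ℝ))) *
          ∫ x : EuclideanSpace ℝ (Fin N), |W N x| ^ ((2 * (N : ℝ)) / ((N : ℝ) - 2)) := by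
    simp [energy]
  rw [hE]
  -- pointwise rewriting
  have e1 : (∫ x : EuclideanSpace ℝ (Fin N), ‖gradient (W N) x‖ ^ 2)
      = ∫ x : EuclideanSpace ℝ (Fin N),
          (fun r : ℝ => (1 / (N:ℝ)^2) * r ^ 2 / ((1 + r ^ 2 / c) ^ (N:ℕ))) ‖x‖ := by
    apply integral_congr_ae
    filter_upwards with x
    exact norm_gradW hN x
  have e2 : (∫ x : EuclideanSpace ℝ (Fin N), |W N x| ^ ((2 * (N : ℝ)) / ((N : ℝ) - 2)))
      = ∫ x : EuclideanSpace ℝ (Fin N), (fun r : ℝ => ((1 + r ^ 2 / c) ^ (N:ℕ))⁻¹) ‖x‖ := by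
    apply integral_congr_ae
    filter_upwards with x
    exact absW_pow hN x
  have r1 := radial hN (fun r : ℝ => (1 / (N:ℝ)^2) * r ^ 2 / ((1 + r ^ 2 / c) ^ (N:ℕ)))
  have r2 := radial hN (fun r : ℝ => ((1 + r ^ 2 / c) ^ (N:ℕ))⁻¹)
  rw [e1, e2, r1, r2]
  set K : ℝ := (N : ℝ) * (volume (Metric.ball (0 : EuclideanSpace ℝ (Fin N)) 1)).toReal with hK
  have hKpos : 0 < K := by
    apply mul_pos hNpos
    rw [ENNReal.toReal_pos_iff]
    exact ⟨Metric.measure_ball_pos volume 0 one_pos, measure_ball_lt_top⟩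
  -- identify with A, B, D
  set A : ℝ := ∫ r in Ioi (0:ℝ), r ^ (N - 1) / (1 + r ^ 2 / c) ^ N with hA
  set B : ℝ := ∫ r in Ioi (0:ℝ), (r ^ 2 / c) * r ^ (N - 1) / (1 + r ^ 2 / c) ^ N with hB
  have hint : ∀ a : ℕ, (a:ℝ) < 2*(N:ℝ) - 1 →
      IntegrableOn (fun r : ℝ => r ^ a / (1 + r ^ 2 / c) ^ N) (Ioi 0) := fun a ha => int_aux N hc a ha
  have hNsub : N - 1 + 2 = N + 1 := by omega
  have hintA : IntegrableOn (fun r : ℝ => r ^ (N-1) / (1 + r ^ 2 / c) ^ N) (Ioi 0) := by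
    apply hint
    have : ((N - 1 : ℕ) : ℝ) ≤ (N:ℝ) := by
      have : (N - 1 : ℕ) ≤ N := by omega
      exact_mod_cast this
    linarith
  have hintB : IntegrableOn (fun r : ℝ => (r ^ 2 / c) * r ^ (N - 1) / (1 + r ^ 2 / c) ^ N) (Ioi 0) := by
    have h2 := (hint (N + 1) (by push_cast; linarith)).const_mul (1/c)
    refine IntegrableOn.congr_fun h2 (fun r _ => ?_) measurableSet_Ioi
    rw [← hNsub, pow_add]
    ring
  -- the first integral is (c / N^2) * B
  have eq1 : (∫ r in Ioi (0:ℝ), r ^ (N - 1) * ((1 / (N:ℝ)^2) * r ^ 2 / ((1 + r ^ 2 / c) ^ N)))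
      = (c / (N:ℝ)^2) * B := by
    rw [hB, ← integral_const_mul]
    apply setIntegral_congr_fun measurableSet_Ioi
    intro r _
    have : c ≠ 0 := hc.ne'
    field_simp
  have eq2 : (∫ r in Ioi (0:ℝ), r ^ (N - 1) * ((1 + r ^ 2 / c) ^ (N:ℕ))⁻¹) = A := by
    rw [hA]
    apply setIntegral_congr_fun measurableSet_Ioi
    intro r _
    simp [div_eq_mul_inv]
  rw [eq1, eq2]
  -- B - A = D > 0
  have hD : 0 < B - A := by
    have := D_pos N hN hc
    have hBA : B - A = ∫ r in Ioi (0:ℝ), (r ^ 2 / c - 1) * r ^ (N - 1) / (1 + r ^ 2 / c) ^ N := by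
      rw [hA, hB, ← integral_sub hintB hintA]
      apply setIntegral_congr_fun measurableSet_Ioi
      intro r _
      ring
    rw [hBA]
    exact this
  have harith : (1/2) * (K * ((c / (N:ℝ)^2) * B)) - (((N : ℝ) - 2) / (2 * (N : ℝ))) * (K * A)
      = (((N : ℝ) - 2) / (2 * (N : ℝ))) * K * (B - A) := by
    rw [hcdef]
    field_simp
  rw [harith]
  exact mul_pos (mul_pos (div_pos (by linarith) (by linarith)) hKpos) hD

/-- assuming the sharp Sobolev inequality, any `v ∈ Ḣ¹` with
`‖∇v‖² ≤ ‖∇W‖²` and `E(v,0) ≤ E(W,0)` satisfies `‖∇v‖²/‖∇W‖² ≤ E(v,0)/E(W,0)`. -/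
theorem stmt9 (N : ℕ) (hN : N = 3 ∨ N = 4 ∨ N = 5)
    (hSob : ∀ u : EuclideanSpace ℝ (Fin N) → ℝ, memH1 N u →
      (∫ x, |u x| ^ ((2 * (N : ℝ)) / ((N : ℝ) - 2))) ^ (((N : ℝ) - 2) / (2 * (N : ℝ))) ≤
        CN N * (∫ x : EuclideanSpace ℝ (Fin N), ‖gradient u x‖ ^ 2) ^ ((1 : ℝ) / 2)) :
    ∀ v : EuclideanSpace ℝ (Fin N) → ℝ, memH1 N v →
      (∫ x : EuclideanSpace ℝ (Fin N), ‖gradient v x‖ ^ 2) ≤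
        (∫ x : EuclideanSpace ℝ (Fin N), ‖gradient (W N) x‖ ^ 2) →
      energy N v (fun _ => 0) ≤ energy N (W N) (fun _ => 0) →
      (∫ x : EuclideanSpace ℝ (Fin N), ‖gradient v x‖ ^ 2) /
          (∫ x : EuclideanSpace ℝ (Fin N), ‖gradient (W N) x‖ ^ 2) ≤
        energy N v (fun _ => 0) / energy N (W N) (fun _ => 0) := by
  intro v hv hgrad hle
  have hN3 : 3 ≤ N := by rcases hN with h | h | h <;> omega
  have hN3' : (3:ℝ) ≤ (N:ℝ) := by exact_mod_cast hN3
  have hN2 : (0:ℝ) < (N:ℝ) - 2 := by linarith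
  have hN0 : (0:ℝ) < (N:ℝ) := by linarith
  set q : ℝ := (2 * (N : ℝ)) / ((N : ℝ) - 2) with hq
  set k : ℝ := ((N : ℝ) - 2) / (2 * (N : ℝ)) with hk
  set Y : ℝ := ∫ x : EuclideanSpace ℝ (Fin N), ‖gradient (W N) x‖ ^ 2 with hY
  set y : ℝ := ∫ x : EuclideanSpace ℝ (Fin N), ‖gradient v x‖ ^ 2 with hy
  set I : ℝ := ∫ x, |W N x| ^ q with hI
  set Iv : ℝ := ∫ x, |v x| ^ q with hIv
  have hq_pos : 0 < q := by rw [hq]; positivity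
  have hk_pos : 0 < k := by rw [hk]; positivity
  have hkq : k * q = 1 := by rw [hk, hq]; field_simp
  have hI0 : 0 ≤ I := integral_nonneg fun x => Real.rpow_nonneg (abs_nonneg _) _
  have hIv0 : 0 ≤ Iv := integral_nonneg fun x => Real.rpow_nonneg (abs_nonneg _) _
  have hy0 : 0 ≤ y := integral_nonneg fun x => pow_two_nonneg _
  have hEW : energy N (W N) (fun _ => 0) = (1/2) * Y - k * I := by
    simp [energy, hY, hI, hk, hq]
  have hEv : energy N v (fun _ => 0) = (1/2) * y - k * Iv := by
    simp [energy, hy, hIv, hk, hq]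
  have hEWpos : 0 < energy N (W N) (fun _ => 0) := EW_pos hN3
  have hCN : CN N = I ^ k / Y ^ ((1:ℝ)/2) := by
    rw [CN]
  have hsob : Iv ^ k ≤ CN N * y ^ ((1:ℝ)/2) := hSob v hv
  set EW : ℝ := energy N (W N) (fun _ => 0) with hEWdef
  set Ev : ℝ := energy N v (fun _ => 0) with hEvdef
  clear_value EW Ev
  clear hEWdef hEvdef
  clear_value Y y I Iv
  clear hY hy hI hIv hSob
  have hYpos : 0 < Y := by
    rw [hEW] at hEWpos
    nlinarith [mul_nonneg hk_pos.le hI0]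
  have hCN0 : 0 ≤ CN N := by
    rw [hCN]
    exact div_nonneg (Real.rpow_nonneg hI0 _) (Real.rpow_nonneg hYpos.le _)
  -- step 1 : CN ^ q * Y ^ (q/2) = I
  have hYq2 : (Y ^ ((1:ℝ)/2)) ^ q = Y ^ (q / 2) := by
    rw [← Real.rpow_mul hYpos.le]
    congr 1
    ring
  have hCNq : CN N ^ q * Y ^ (q/2) = I := by
    rw [hCN, Real.div_rpow (Real.rpow_nonneg hI0 _) (Real.rpow_nonneg hYpos.le _)]
    rw [← Real.rpow_mul hI0, hkq, Real.rpow_one, hYq2]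
    rw [div_mul_cancel₀]
    exact (Real.rpow_pos_of_pos hYpos _).ne'
  -- step 2 : Sobolev
  have hyq2 : (y ^ ((1:ℝ)/2)) ^ q = y ^ (q / 2) := by
    rw [← Real.rpow_mul hy0]
    congr 1
    ring
  have key : Iv ≤ CN N ^ q * y ^ (q/2) := by
    have h1 : (Iv ^ k) ^ q ≤ (CN N * y ^ ((1:ℝ)/2)) ^ q :=
      Real.rpow_le_rpow (Real.rpow_nonneg hIv0 _) hsob hq_pos.le
    rwa [← Real.rpow_mul hIv0, hkq, Real.rpow_one,
      Real.mul_rpow hCN0 (Real.rpow_nonneg hy0 _), hyq2] at h1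
  -- step 3 : Y * y^(q/2) ≤ y * Y^(q/2)
  have hq21 : 0 ≤ q / 2 - 1 := by
    rw [hq, div_div, sub_nonneg, le_div_iff₀ (by linarith : (0:ℝ) < ((N:ℝ) - 2) * 2)]
    linarith
  have key2 : Y * y ^ (q/2) ≤ y * Y ^ (q/2) := by
    rcases eq_or_lt_of_le hy0 with h0 | hy_pos
    · rw [← h0, Real.zero_rpow (by positivity : q/2 ≠ 0)]
      simp
    · have e : q / 2 = 1 + (q / 2 - 1) := by ring
      rw [e, Real.rpow_add hy_pos, Real.rpow_add hYpos, Real.rpow_one, Real.rpow_one]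
      have mono : y ^ (q/2 - 1) ≤ Y ^ (q/2 - 1) := Real.rpow_le_rpow hy0 hgrad hq21
      nlinarith [mul_le_mul_of_nonneg_left mono (mul_nonneg hYpos.le hy_pos.le)]
  -- conclusion
  rw [div_le_div_iff₀ hYpos hEWpos]
  have hCq0 : 0 ≤ k * CN N ^ q := mul_nonneg hk_pos.le (Real.rpow_nonneg hCN0 _)
  have f1 : EW = (1/2) * Y - k * (CN N ^ q * Y ^ (q/2)) := by
    rw [hEW, hCNq]
  have f2 : (1/2) * y - k * (CN N ^ q * y ^ (q/2)) ≤ Ev := by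
    rw [hEv]
    nlinarith [mul_le_mul_of_nonneg_left key hk_pos.le]
  have p1 : ((1/2) * y - k * (CN N ^ q * y ^ (q/2))) * Y ≤ Ev * Y :=
    mul_le_mul_of_nonneg_right f2 hYpos.le
  have p2 : (k * CN N ^ q) * (Y * y ^ (q/2)) ≤ (k * CN N ^ q) * (y * Y ^ (q/2)) :=
    mul_le_mul_of_nonneg_left key2 hCq0
  have e3 : y * EW
      = (1/2) * (y * Y) - (k * CN N ^ q) * (y * Y ^ (q/2)) := by
    rw [f1]; ring
  have e4 : ((1/2) * y - k * (CN N ^ q * y ^ (q/2))) * Y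
      = (1/2) * (y * Y) - (k * CN N ^ q) * (Y * y ^ (q/2)) := by ring
  linarith
end

section
/- (Energy trapping.) Let N ∈ {3,4,5}, let W be the Aubin–Talenti function, set C_N := ‖W‖_{L^{2N/(N−2)}}/‖∇W‖_{L²}, and assume the sharp Sobolev inequality: for every u in the homogeneous Sobolev space Ḣ¹(ℝ^N), ‖u‖_{L^{2N/(N−2)}} ≤ C_N ‖∇u‖_{L²}. Then for every v ∈ Ḣ¹(ℝ^N) and g ∈ L²(ℝ^N) satisfying E(v,g) = E(W,0) and ‖∇v‖_{L²} < ‖∇W‖_{L²}, one has ‖∇v‖_{L²}² + (N/2)‖g‖_{L²}² ≤ ‖∇W‖_{L²}². -/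
open MeasureTheory Real Set

lemma base_pos_s10 {N : ℕ} (hN2 : 2 < N) (t : ℝ) (ht : 0 ≤ t) :
    0 < 1 + t / ((N : ℝ) * ((N : ℝ) - 2)) := by
  have h2 : (2 : ℝ) < N := by exact_mod_cast hN2
  have h3 : (0:ℝ) < (N : ℝ) * ((N : ℝ) - 2) := by nlinarith
  positivity

lemma gradW {N : ℕ} (hN2 : 2 < N) (x : EuclideanSpace ℝ (Fin N)) :
    HasGradientAt (W N)
      ((-(((N:ℝ)-2)/((N:ℝ)*((N:ℝ)-2))) *
        (1 + ‖x‖^2/((N:ℝ)*((N:ℝ)-2))) ^ (-(N:ℝ)/2)) • x) x := by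
  have h2 : (2 : ℝ) < N := by exact_mod_cast hN2
  set β : ℝ := (N:ℝ)*((N:ℝ)-2) with hβdef
  have hβ : 0 < β := by rw [hβdef]; nlinarith
  set e : ℝ := -(((N:ℝ)-2)/2) with hedef
  have hq : HasFDerivAt (fun y : EuclideanSpace ℝ (Fin N) => ‖y‖^2)
      (2 • (innerSL ℝ x)) x := (hasStrictFDerivAt_norm_sq x).hasFDerivAt
  have h1 : HasDerivAt (fun t : ℝ => 1 + t/β) (1/β) (‖x‖^2) := by
    simpa using ((hasDerivAt_id (‖x‖^2)).div_const β).const_add 1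
  have hpos : (1 : ℝ) + ‖x‖^2/β ≠ 0 := (base_pos_s10 hN2 _ (by positivity)).ne'
  have hφ : HasDerivAt (fun t : ℝ => (1 + t/β) ^ e)
      (1/β * e * (1 + ‖x‖^2/β) ^ (e - 1)) (‖x‖^2) := h1.rpow_const (Or.inl hpos)
  have hF : HasFDerivAt (W N)
      ((1/β * e * (1 + ‖x‖^2/β) ^ (e - 1)) • (2 • (innerSL ℝ x))) x :=
    by have := hφ.comp_hasFDerivAt x hq; exact this
  rw [hasGradientAt_iff_hasFDerivAt]
  refine hF.congr_fderiv ?_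
  symm
  ext y
  have he1 : e - 1 = -(N:ℝ)/2 := by rw [hedef]; ring
  rw [he1]
  rw [two_smul]
  simp only [InnerProductSpace.toDual_apply_apply, ContinuousLinearMap.smul_apply,
    ContinuousLinearMap.add_apply, innerSL_apply_apply, real_inner_smul_left, smul_eq_mul]
  ring

lemma gradW_norm_sq {N : ℕ} (hN2 : 2 < N) (x : EuclideanSpace ℝ (Fin N)) :
    ‖gradient (W N) x‖ ^ 2 =
      (((N:ℝ)-2)/((N:ℝ)*((N:ℝ)-2)))^2 * (‖x‖^2 * (1 + ‖x‖^2/((N:ℝ)*((N:ℝ)-2))) ^ (-(N:ℝ))) := by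
  have h2 : (2 : ℝ) < N := by exact_mod_cast hN2
  rw [(gradW hN2 x).gradient]
  rw [norm_smul]
  have hb : (0:ℝ) < 1 + ‖x‖^2/((N:ℝ)*((N:ℝ)-2)) := base_pos_s10 hN2 _ (by positivity)
  have hsq : ((1 + ‖x‖^2/((N:ℝ)*((N:ℝ)-2))) ^ (-(N:ℝ)/2)) ^ 2
      = (1 + ‖x‖^2/((N:ℝ)*((N:ℝ)-2))) ^ (-(N:ℝ)) := by
    rw [← Real.rpow_natCast ((1 + ‖x‖^2/((N:ℝ)*((N:ℝ)-2))) ^ (-(N:ℝ)/2)) 2,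
      ← Real.rpow_mul hb.le]
    norm_num
  rw [mul_pow, Real.norm_eq_abs, sq_abs, mul_pow, hsq]
  have : (-(((N:ℝ)-2)/((N:ℝ)*((N:ℝ)-2))))^2 = (((N:ℝ)-2)/((N:ℝ)*((N:ℝ)-2)))^2 := by ring
  rw [this]; ring

lemma W_pow {N : ℕ} (hN2 : 2 < N) (x : EuclideanSpace ℝ (Fin N)) :
    |W N x| ^ ((2 * (N : ℝ)) / ((N : ℝ) - 2)) =
      (1 + ‖x‖^2/((N:ℝ)*((N:ℝ)-2))) ^ (-(N:ℝ)) := by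
  have h2 : (2 : ℝ) < N := by exact_mod_cast hN2
  have hb : (0:ℝ) < 1 + ‖x‖^2/((N:ℝ)*((N:ℝ)-2)) := base_pos_s10 hN2 _ (by positivity)
  have hW : W N x = (1 + ‖x‖^2/((N:ℝ)*((N:ℝ)-2))) ^ (-(((N:ℝ)-2)/2)) := rfl
  rw [hW, abs_of_pos (Real.rpow_pos_of_pos hb _), ← Real.rpow_mul hb.le]
  have hne : (N:ℝ)-2 ≠ 0 := by linarith
  congr 1
  field_simp

lemma integrable_g {N : ℕ} (a : ℕ) (hN2 : 2 < N) (ha : (a:ℝ) < 2*(N:ℝ) - 1) :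
    IntegrableOn (fun y : ℝ => y ^ a * (1 + y^2/((N:ℝ)*((N:ℝ)-2))) ^ (-(N:ℝ))) (Ioi 0) := by
  have h2 : (2 : ℝ) < N := by exact_mod_cast hN2
  set β : ℝ := (N:ℝ)*((N:ℝ)-2) with hβdef
  have hβ : 0 < β := by rw [hβdef]; nlinarith
  have hcont : Continuous (fun y : ℝ => y ^ a * (1 + y^2/β) ^ (-(N:ℝ))) := by
    refine (continuous_pow a).mul (Continuous.rpow_const (by fun_prop) fun y => Or.inl ?_)
    have : (0:ℝ) < 1 + y^2/β := by positivity
    exact this.ne'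
  have h01 : IntegrableOn (fun y : ℝ => y ^ a * (1 + y^2/β) ^ (-(N:ℝ))) (Ioc 0 1) :=
    hcont.integrableOn_Ioc
  have h1i : IntegrableOn (fun y : ℝ => y ^ a * (1 + y^2/β) ^ (-(N:ℝ))) (Ioi 1) := by
    have hint : IntegrableOn (fun y : ℝ => β ^ (N:ℝ) * y ^ ((a:ℝ) - 2*(N:ℝ))) (Ioi 1) :=
      (integrableOn_Ioi_rpow_of_lt (by linarith) one_pos).const_mul _
    refine hint.mono' hcont.aestronglyMeasurable.restrict ?_
    refine (ae_restrict_iff' measurableSet_Ioi).2 (ae_of_all _ fun y hy => ?_)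
    have hy1 : (1:ℝ) < y := hy
    have hy0 : (0:ℝ) < y := lt_trans one_pos hy1
    have hu : (0:ℝ) < 1 + y^2/β := by positivity
    rw [Real.norm_eq_abs, abs_of_nonneg (by positivity)]
    have hle : (1 + y^2/β) ^ (-(N:ℝ)) ≤ (y^2/β) ^ (-(N:ℝ)) :=
      Real.rpow_le_rpow_of_nonpos (by positivity) (by linarith) (by simp [h2.le])
    calc y ^ a * (1 + y^2/β) ^ (-(N:ℝ)) ≤ y ^ a * (y^2/β) ^ (-(N:ℝ)) :=
          mul_le_mul_of_nonneg_left hle (by positivity)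
      _ = β ^ (N:ℝ) * y ^ ((a:ℝ) - 2*(N:ℝ)) := by
          rw [Real.div_rpow (by positivity) hβ.le, ← Real.rpow_natCast y 2,
            ← Real.rpow_mul hy0.le, ← Real.rpow_natCast y a, Real.rpow_neg hβ.le,
            div_inv_eq_mul]
          rw [show ((2:ℕ):ℝ) * (-(N:ℝ)) = -(2*(N:ℝ)) by push_cast; ring,
            Real.rpow_neg hy0.le, mul_comm (y ^ ((a:ℕ):ℝ)), mul_assoc,
            ← Real.rpow_neg hy0.le]
          rw [show (a:ℝ) - 2*(N:ℝ) = -(2*(N:ℝ)) + ((a:ℕ):ℝ) by ring,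
            Real.rpow_add hy0]
          ring
  have := h01.union h1i
  rwa [Ioc_union_Ioi_eq_Ioi zero_le_one] at this

lemma oneD_identity {N : ℕ} (hN2 : 2 < N) :
    (((N:ℝ)-2)/((N:ℝ)*((N:ℝ)-2)))^2 *
      ∫ y in Ioi (0:ℝ), y ^ (N+1) * (1 + y^2/((N:ℝ)*((N:ℝ)-2))) ^ (-(N:ℝ)) =
    ∫ y in Ioi (0:ℝ), y ^ (N-1) * (1 + y^2/((N:ℝ)*((N:ℝ)-2))) ^ (-(N:ℝ)) := by
  obtain ⟨m, rfl⟩ : ∃ m, N = m + 3 := ⟨N - 3, by omega⟩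
  set N : ℕ := m + 3 with hNdef
  have h2 : (2 : ℝ) < N := by exact_mod_cast hN2
  set β : ℝ := (N:ℝ)*((N:ℝ)-2) with hβdef
  have hβ : 0 < β := by rw [hβdef]; nlinarith
  have hune : ∀ y : ℝ, (0:ℝ) < 1 + y^2/β := fun y => by positivity
  have hsub : N - 1 = m + 2 := rfl
  have intg1 : IntegrableOn (fun y : ℝ => y ^ (N-1) * (1 + y^2/β) ^ (-(N:ℝ))) (Ioi 0) :=
    integrable_g (N-1) (by omega) (by rw [hsub, hNdef]; push_cast; linarith)
  have intg2 : IntegrableOn (fun y : ℝ => y ^ (N+1) * (1 + y^2/β) ^ (-(N:ℝ))) (Ioi 0) :=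
    integrable_g (N+1) (by omega) (by push_cast; linarith)
  set G : ℝ → ℝ := fun y => y^N * (1 + y^2/β) ^ ((1:ℝ)-(N:ℝ)) with hGdef
  set h : ℝ → ℝ := fun y => (N:ℝ) * (y^(N-1) * (1 + y^2/β) ^ (-(N:ℝ)))
      + ((2-(N:ℝ))/β) * (y^(N+1) * (1 + y^2/β) ^ (-(N:ℝ))) with hhdef
  have hint : IntegrableOn h (Ioi 0) := (intg1.const_mul _).add (intg2.const_mul _)
  have hderiv : ∀ y ∈ Ioi (0:ℝ), HasDerivAt G (h y) y := by
    intro y hy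
    have hu0 : (0:ℝ) < 1 + y^2/β := hune y
    have hu : HasDerivAt (fun t : ℝ => 1 + t^2/β) (((2:ℕ):ℝ)*y^(2-1)/β) y :=
      ((hasDerivAt_pow 2 y).div_const β).const_add 1
    have hur := hu.rpow_const (p := (1:ℝ)-(N:ℝ)) (Or.inl hu0.ne')
    have hG := (hasDerivAt_pow N y).mul hur
    refine hG.congr_deriv ?_
    symm
    rw [hhdef]
    simp only
    rw [show ((1:ℝ)-(N:ℝ)) - 1 = -(N:ℝ) by ring,
      show ((1:ℝ)-(N:ℝ)) = 1 + (-(N:ℝ)) by ring, Real.rpow_add hu0, Real.rpow_one]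
    show _ = (N:ℝ) * y ^ (N - 1) * _ + _
    rw [hsub, hβdef, hNdef]
    push_cast
    ring
  have hcontG : ContinuousWithinAt G (Ici 0) 0 := by
    refine Continuous.continuousWithinAt ?_
    exact (continuous_pow N).mul (Continuous.rpow_const (by fun_prop)
      (fun y => Or.inl (hune y).ne'))
  have hG0 : G 0 = 0 := by simp [hGdef, hNdef]
  have htop : Filter.Tendsto G Filter.atTop (nhds 0) := by
    have hb1 : ∀ᶠ y in Filter.atTop, 0 ≤ G y := by
      filter_upwards [Filter.eventually_ge_atTop (0:ℝ)] with y hy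
      have := (hune y).le
      rw [hGdef]; positivity
    have hb2 : ∀ᶠ y in Filter.atTop, G y ≤ β^((N:ℝ)-1) * y^((2:ℝ)-(N:ℝ)) := by
      filter_upwards [Filter.eventually_ge_atTop (1:ℝ)] with y hy
      have hy0 : (0:ℝ) < y := lt_of_lt_of_le one_pos hy
      have hle : (1 + y^2/β) ^ ((1:ℝ)-(N:ℝ)) ≤ (y^2/β) ^ ((1:ℝ)-(N:ℝ)) :=
        Real.rpow_le_rpow_of_nonpos (by positivity) (by linarith) (by linarith)
      calc G y ≤ y^N * (y^2/β) ^ ((1:ℝ)-(N:ℝ)) :=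
            mul_le_mul_of_nonneg_left hle (by positivity)
        _ = β^((N:ℝ)-1) * y^((2:ℝ)-(N:ℝ)) := by
            have e1 : (y^2/β) ^ ((1:ℝ)-(N:ℝ)) = (y^2)^((1:ℝ)-(N:ℝ)) * β^((N:ℝ)-1) := by
              rw [Real.div_rpow (by positivity) hβ.le,
                show ((1:ℝ)-(N:ℝ)) = -((N:ℝ)-1) by ring, Real.rpow_neg hβ.le,
                div_inv_eq_mul]
            have e2 : ((y^2:ℝ))^((1:ℝ)-(N:ℝ)) = y ^ ((2:ℝ)*(1-(N:ℝ))) := by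
              rw [← Real.rpow_natCast y 2, ← Real.rpow_mul hy0.le]; norm_num
            have e3 : y^N = y ^ ((N:ℕ):ℝ) := (Real.rpow_natCast y N).symm
            rw [e1, e2, e3, ← mul_assoc, ← Real.rpow_add hy0,
              show ((N:ℕ):ℝ) + (2:ℝ)*(1-(N:ℝ)) = (2:ℝ)-(N:ℝ) by push_cast; ring]
            ring
    have htend : Filter.Tendsto (fun y : ℝ => β^((N:ℝ)-1) * y^((2:ℝ)-(N:ℝ)))
        Filter.atTop (nhds 0) := by
      have := (tendsto_rpow_neg_atTop (by linarith : (0:ℝ) < (N:ℝ)-2)).const_mul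
        (β^((N:ℝ)-1))
      rw [mul_zero] at this
      refine this.congr' ?_
      filter_upwards [Filter.eventually_gt_atTop (0:ℝ)] with y hy
      rw [show (2:ℝ)-(N:ℝ) = -((N:ℝ)-2) by ring]
    exact squeeze_zero' hb1 hb2 htend
  have key := integral_Ioi_of_hasDerivAt_of_tendsto hcontG hderiv hint htop
  rw [hG0, sub_zero] at key
  rw [hhdef] at key
  rw [integral_add (intg1.const_mul _) (intg2.const_mul _),
    integral_const_mul, integral_const_mul] at key
  have hNne : (N:ℝ) ≠ 0 := by positivity
  have hβne : β ≠ 0 := hβ.ne'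
  set J1 := ∫ y in Ioi (0:ℝ), y ^ (N-1) * (1 + y^2/β) ^ (-(N:ℝ))
  set J2 := ∫ y in Ioi (0:ℝ), y ^ (N+1) * (1 + y^2/β) ^ (-(N:ℝ))
  have hβeq : β = (N:ℝ) * ((N:ℝ)-2) := hβdef
  have hN2ne : (N:ℝ) - 2 ≠ 0 := by linarith
  rw [hβeq] at key ⊢
  field_simp at key ⊢
  have hk : J2 = (N:ℝ)^2 * J1 := mul_left_cancel₀ hN2ne (by linear_combination (-1:ℝ) * key)
  rw [hk]

lemma key_identity {N : ℕ} (hN2 : 2 < N) :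
    (∫ x : EuclideanSpace ℝ (Fin N), ‖gradient (W N) x‖ ^ 2) =
      ∫ x : EuclideanSpace ℝ (Fin N), |W N x| ^ ((2 * (N : ℝ)) / ((N : ℝ) - 2)) := by
  haveI : Nonempty (Fin N) := ⟨⟨0, by omega⟩⟩
  haveI : Nontrivial (EuclideanSpace ℝ (Fin N)) := inferInstance
  set β : ℝ := (N:ℝ)*((N:ℝ)-2) with hβdef
  simp_rw [gradW_norm_sq hN2, W_pow hN2]
  rw [MeasureTheory.integral_fun_norm_addHaar volume
      (fun r : ℝ => (((N:ℝ)-2)/β)^2 * (r^2 * (1+r^2/β)^(-(N:ℝ)))),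
    MeasureTheory.integral_fun_norm_addHaar volume
      (fun r : ℝ => (1+r^2/β)^(-(N:ℝ)))]
  rw [finrank_euclideanSpace_fin]
  congr 1
  congr 1
  simp_rw [smul_eq_mul]
  have hrw : (fun y : ℝ => y ^ (N-1) * ((((N:ℝ)-2)/β)^2 * (y^2 * (1+y^2/β)^(-(N:ℝ)))))
      = fun y : ℝ => (((N:ℝ)-2)/β)^2 * (y^(N+1) * (1+y^2/β)^(-(N:ℝ))) := by
    funext y
    have hp : N - 1 + 2 = N + 1 := by omega
    rw [← hp, pow_add]
    ring
  rw [hrw, integral_const_mul]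
  exact oneD_identity hN2


/-- Energy trapping: assuming the sharp Sobolev inequality, any
`(v,g) ∈ Ḣ¹ × L²` with `E(v,g) = E(W,0)` and `‖∇v‖ < ‖∇W‖` satisfies
`‖∇v‖² + (N/2)‖g‖² ≤ ‖∇W‖²`. -/
theorem stmt10 (N : ℕ) (hN : N = 3 ∨ N = 4 ∨ N = 5)
    (hSob : ∀ u : EuclideanSpace ℝ (Fin N) → ℝ, memH1 N u →
      (∫ x, |u x| ^ ((2 * (N : ℝ)) / ((N : ℝ) - 2))) ^ (((N : ℝ) - 2) / (2 * (N : ℝ))) ≤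
        CN N * (∫ x : EuclideanSpace ℝ (Fin N), ‖gradient u x‖ ^ 2) ^ ((1 : ℝ) / 2)) :
    ∀ (v g : EuclideanSpace ℝ (Fin N) → ℝ), memH1 N v → MemLp g 2 volume →
      energy N v g = energy N (W N) (fun _ => 0) →
      (∫ x : EuclideanSpace ℝ (Fin N), ‖gradient v x‖ ^ 2) <
        (∫ x : EuclideanSpace ℝ (Fin N), ‖gradient (W N) x‖ ^ 2) →
      (∫ x : EuclideanSpace ℝ (Fin N), ‖gradient v x‖ ^ 2) +
          ((N : ℝ) / 2) * (∫ x, (g x) ^ 2) ≤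
        (∫ x : EuclideanSpace ℝ (Fin N), ‖gradient (W N) x‖ ^ 2) := by
  intro v g hv hg hE hlt
  have hN2 : 2 < N := by rcases hN with h|h|h <;> omega
  have h2 : (2:ℝ) < N := by exact_mod_cast hN2
  have hNne : (N:ℝ) ≠ 0 := by positivity
  have hN2ne : (N:ℝ) - 2 ≠ 0 := by intro h; linarith [h]
  set A := ∫ x : EuclideanSpace ℝ (Fin N), ‖gradient v x‖^2 with hAdef
  set K := ∫ x : EuclideanSpace ℝ (Fin N), ‖gradient (W N) x‖^2 with hKdef
  set B := ∫ x, (g x)^2 with hBdef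
  set s : ℝ := (2 * (N : ℝ)) / ((N : ℝ) - 2) with hsdef
  set c : ℝ := ((N : ℝ) - 2) / (2 * (N : ℝ)) with hcdef
  set Iv := ∫ x, |v x| ^ s with hIvdef
  have hA : 0 ≤ A := integral_nonneg fun x => sq_nonneg _
  have hB : 0 ≤ B := integral_nonneg fun x => sq_nonneg _
  have hIv : 0 ≤ Iv := integral_nonneg fun x => Real.rpow_nonneg (abs_nonneg _) _
  have hK : 0 < K := lt_of_le_of_lt hA hlt
  have hIWK : (∫ x, |W N x| ^ s) = K := (key_identity hN2).symm
  simp only [energy] at hE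
  norm_num at hE
  rw [hIWK, ← hcdef, ← hsdef] at hE
  have hS := hSob v hv
  rw [CN, hIWK] at hS
  -- hS : Iv ^ c ≤ K ^ c / K ^ (1/2) * A ^ (1/2)
  have hcs : c * s = 1 := by rw [hcdef, hsdef]; field_simp
  have hspos : 0 < s := by rw [hsdef]; apply div_pos <;> linarith
  have hs2 : 1 ≤ s/2 := by
    rw [hsdef, div_div]
    rw [one_le_div (by nlinarith : (0:ℝ) < ((N:ℝ)-2)*2)]
    nlinarith
  have hIvA : Iv ≤ A := by
    have l1 : (Iv ^ c) ^ s ≤ (K ^ (c - 1/2) * A ^ ((1:ℝ)/2)) ^ s := by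
      refine Real.rpow_le_rpow (Real.rpow_nonneg hIv _) ?_ hspos.le
      rwa [Real.rpow_sub hK]
    rw [← Real.rpow_mul hIv,
      Real.mul_rpow (Real.rpow_nonneg hK.le _) (Real.rpow_nonneg hA _),
      ← Real.rpow_mul hK.le, ← Real.rpow_mul hA, hcs, Real.rpow_one,
      show (c - 1/2)*s = 1 - s/2 by rw [sub_mul, hcs]; ring,
      show (1/2)*s = s/2 by ring] at l1
    rcases hA.eq_or_lt with h0 | hApos
    · have : A ^ (s/2) = 0 := by
        rw [← h0, Real.zero_rpow (by linarith : s/2 ≠ 0)]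
      rw [this, mul_zero] at l1
      linarith
    · have hAK : A^(s/2 - 1) ≤ K^(s/2 - 1) := Real.rpow_le_rpow hA hlt.le (by linarith)
      have hsplit : A * A^(s/2 - 1) = A^(s/2) := by
        nth_rw 1 [← Real.rpow_one A]
        rw [← Real.rpow_add hApos]
        ring_nf
      calc Iv ≤ K^(1-s/2) * (A * A^(s/2-1)) := by rw [hsplit]; exact l1
        _ ≤ K^(1-s/2) * (A * K^(s/2-1)) :=
            mul_le_mul_of_nonneg_left
              (mul_le_mul_of_nonneg_left hAK hApos.le) (Real.rpow_nonneg hK.le _)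
        _ = A * (K^(1-s/2) * K^(s/2-1)) := by ring
        _ = A := by
            rw [← Real.rpow_add hK, show (1-s/2)+(s/2-1) = 0 by ring,
              Real.rpow_zero, mul_one]
  have hcIv : c*Iv ≤ c*A :=
    mul_le_mul_of_nonneg_left hIvA (by rw [hcdef]; apply div_nonneg <;> linarith)
  have hBle : B ≤ K - A - 2*(c*K) + 2*(c*A) := by linarith
  have hfinal : (N:ℝ)/2 * B ≤ K - A := by
    calc (N:ℝ)/2*B ≤ (N:ℝ)/2 * (K - A - 2*(c*K) + 2*(c*A)) := by
          apply mul_le_mul_of_nonneg_left hBle (by positivity)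
      _ = K - A := by rw [hcdef]; field_simp; ring
  linarith
end

section
/- Let p > 1 and a ∈ ℝ. There is no twice differentiable function y : [a,∞) → ℝ satisfying simultaneously: y(t) > 0 and y''(t) > 0 for all t ≥ a; y'(a) ≥ 0; and p·y'(t)² ≤ y(t)·y''(t) for all t ≥ a. (Equivalently: a positive convex function satisfying the differential inequality y'² ≤ p^{−1} y y'' with y' initially nonnegative must blow up in finite time.) -/
/-- for `p > 1` there is no positive twice differentiable function on `[a,∞)`
with `y'' > 0`, `y'(a) ≥ 0` and `p y'² ≤ y y''`; such a function would blow up in finite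
time. -/
theorem stmt13 (p a : ℝ) (hp : 1 < p) :
    ¬ ∃ y y₁ y₂ : ℝ → ℝ,
      (∀ t ∈ Set.Ici a, HasDerivWithinAt y (y₁ t) (Set.Ici a) t) ∧
      (∀ t ∈ Set.Ici a, HasDerivWithinAt y₁ (y₂ t) (Set.Ici a) t) ∧
      (∀ t ∈ Set.Ici a, 0 < y t) ∧
      (∀ t ∈ Set.Ici a, 0 < y₂ t) ∧
      0 ≤ y₁ a ∧
      (∀ t ∈ Set.Ici a, p * (y₁ t) ^ 2 ≤ y t * y₂ t) := by
  rintro ⟨y, y₁, y₂, hy, hy₁, hpos, h2pos, h1a, hineq⟩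
  -- y₁ is strictly increasing on Ici a, so y₁ t > 0 for t > a
  have hintD : interior (Set.Ici a) = Set.Ioi a := interior_Ici
  have hmono : StrictMonoOn y₁ (Set.Ici a) := by
    apply strictMonoOn_of_hasDerivWithinAt_pos (convex_Ici a)
      (fun t ht => (hy₁ t ht).continuousWithinAt)
    · intro t ht
      rw [hintD] at ht ⊢
      exact ((hy₁ t (Set.mem_Ici.2 (le_of_lt (Set.mem_Ioi.1 ht)))).hasDerivAt (Ici_mem_nhds ht)).hasDerivWithinAt
    · intro t ht
      rw [hintD] at ht
      exact h2pos t (Set.mem_Ici.2 (le_of_lt (Set.mem_Ioi.1 ht)))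
  -- g = y ^ (1 - p)
  set g : ℝ → ℝ := fun t => y t ^ (1 - p) with hg
  set G₁ : ℝ → ℝ := fun t => y₁ t * (1 - p) * y t ^ (-p) with hG₁
  set G₂ : ℝ → ℝ := fun t =>
    y₂ t * (1 - p) * y t ^ (-p) + y₁ t * (1 - p) * (y₁ t * (-p) * y t ^ (-p - 1)) with hG₂
  have hgd : ∀ t ∈ Set.Ici a, HasDerivWithinAt g (G₁ t) (Set.Ici a) t := by
    intro t ht
    have := (hy t ht).rpow_const (p := 1 - p) (Or.inl (hpos t ht).ne')
    simpa [hG₁, show (1 : ℝ) - p - 1 = -p by ring] using this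
  have hG₁d : ∀ t ∈ Set.Ici a, HasDerivWithinAt G₁ (G₂ t) (Set.Ici a) t := by
    intro t ht
    have h1 : HasDerivWithinAt (fun s => y s ^ (-p))
        (y₁ t * (-p) * y t ^ (-p - 1)) (Set.Ici a) t :=
      (hy t ht).rpow_const (Or.inl (hpos t ht).ne')
    have h2 := ((hy₁ t ht).mul_const (1 - p)).mul h1
    exact h2.congr_deriv (by simp only [hG₂]; try ring)
  -- G₂ ≤ 0 on Ici a
  have hG₂nonpos : ∀ t ∈ Set.Ici a, G₂ t ≤ 0 := by
    intro t ht
    have hyt := hpos t ht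
    have hkey : y t ^ (-p - 1) * (y t * y₂ t - p * y₁ t ^ 2) ≥ 0 := by
      apply mul_nonneg (le_of_lt (Real.rpow_pos_of_pos hyt _))
      linarith [hineq t ht]
    have hsplit : y t ^ (-p) = y t ^ (-p - 1) * y t := by
      rw [← Real.rpow_add_one hyt.ne']
      ring_nf
    have : G₂ t = (1 - p) * (y t ^ (-p - 1) * (y t * y₂ t - p * y₁ t ^ 2)) := by
      simp only [hG₂, hsplit]; ring
    rw [this]
    apply mul_nonpos_of_nonpos_of_nonneg (by linarith) hkey
  -- G₁ is antitone on Ici a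
  have hanti : AntitoneOn G₁ (Set.Ici a) := by
    apply antitoneOn_of_hasDerivWithinAt_nonpos (convex_Ici a)
      (fun t ht => (hG₁d t ht).continuousWithinAt)
    · intro t ht
      rw [hintD] at ht ⊢
      exact ((hG₁d t (Set.mem_Ici.2 (le_of_lt (Set.mem_Ioi.1 ht)))).hasDerivAt (Ici_mem_nhds ht)).hasDerivWithinAt
    · intro t ht
      rw [hintD] at ht
      exact hG₂nonpos t (Set.mem_Ici.2 (le_of_lt (Set.mem_Ioi.1 ht)))
  -- at t0 = a + 1, y₁ t0 > 0, hence G₁ t0 = -c < 0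
  set t0 : ℝ := a + 1 with ht0
  have ht0mem : t0 ∈ Set.Ici a := by simp only [ht0, Set.mem_Ici]; linarith
  have hy1t0 : 0 < y₁ t0 := lt_of_le_of_lt h1a (hmono (le_refl a) ht0mem (by simp only [ht0]; linarith))
  set c : ℝ := -G₁ t0 with hc
  have hcpos : 0 < c := by
    have hr := Real.rpow_pos_of_pos (hpos t0 ht0mem) (-p)
    have h3 : 0 < y₁ t0 * (p - 1) * y t0 ^ (-p) := by
      apply mul_pos (mul_pos hy1t0 (by linarith)) hr
    have : G₁ t0 < 0 := by simp only [hG₁]; nlinarith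
    simp only [hc]; linarith
  -- h t = g t + c * t is antitone on Ici t0
  have hIci : Set.Ici t0 ⊆ Set.Ici a := Set.Ici_subset_Ici.2 (by simp only [ht0]; linarith)
  have hhanti : AntitoneOn (fun t => g t + c * t) (Set.Ici t0) := by
    apply antitoneOn_of_hasDerivWithinAt_nonpos (convex_Ici t0)
      (f' := fun t => G₁ t + c)
    · intro t ht
      have hid : HasDerivWithinAt (fun s : ℝ => c * s) c (Set.Ici t0) t :=
        ((hasDerivWithinAt_id t _).const_mul c).congr_deriv (mul_one c)
      exact (((hgd t (hIci ht)).mono hIci).add hid).continuousWithinAt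
    · intro t ht
      rw [interior_Ici] at ht ⊢
      have hgat := (hgd t (hIci (Set.mem_Ici.2 (le_of_lt (Set.mem_Ioi.1 ht))))).hasDerivAt
        (Ici_mem_nhds (lt_of_le_of_lt (by simp only [ht0]; linarith) ht))
      have hid : HasDerivAt (fun s : ℝ => c * s) c t :=
        ((hasDerivAt_id t).const_mul c).congr_deriv (mul_one c)
      exact (hgat.add hid).hasDerivWithinAt
    · intro t ht
      rw [interior_Ici] at ht
      have := hanti ht0mem (hIci (Set.mem_Ici.2 (le_of_lt (Set.mem_Ioi.1 ht)))) (le_of_lt ht)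
      simp only [hc] at this ⊢
      linarith
  -- choose T large: g T ≤ g t0 - c (T - t0) < 0 contradiction
  set T : ℝ := t0 + g t0 / c + 1 with hT
  have hTmem : T ∈ Set.Ici t0 := by
    have : 0 < g t0 / c := div_pos (Real.rpow_pos_of_pos (hpos t0 ht0mem) _) hcpos
    simp only [hT, Set.mem_Ici]; linarith
  have := hhanti (Set.self_mem_Ici) hTmem (by simpa using hTmem)
  have hgT : 0 < g T := Real.rpow_pos_of_pos (hpos T (hIci hTmem)) _
  have hct : c * (g t0 / c) = g t0 := mul_div_cancel₀ _ hcpos.ne'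
  simp only [hT] at this
  nlinarith
end

section
/- (Differential inequality lemma.) Let N ≥ 3 be an integer and let c₀ > 0, C₁ > 0. There exists a constant C > 0, depending only on N, c₀ and C₁, with the following property: for every T > 0 and every twice continuously differentiable function y : [0,T] → ℝ such that y'(t) ≥ c₀ and y(t) > 0 for all t ∈ [0,T], and such that y'(t)² ≤ ((N−2)/(N−1))·y(t)·(y''(t) + C₁/T) for all t ∈ [0,T], one has T·y'(t) ≤ C·y(0) for every t ∈ [0, T/2]. -/
open Set Real

/-- Differential inequality lemma: for `N ≥ 3`, `c₀, C₁ > 0` there is `C > 0`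
such that any positive `C²` function on `[0,T]` with `y' ≥ c₀` and
`y'² ≤ ((N-2)/(N-1)) y (y'' + C₁/T)` satisfies `T y'(t) ≤ C y(0)` on `[0,T/2]`. -/
theorem stmt14 (N : ℕ) (hN : 3 ≤ N) (c₀ C₁ : ℝ) (hc₀ : 0 < c₀) (hC₁ : 0 < C₁) :
    ∃ C > 0, ∀ T > (0 : ℝ), ∀ y y₁ y₂ : ℝ → ℝ,
      (∀ t ∈ Set.Icc 0 T, HasDerivWithinAt y (y₁ t) (Set.Icc 0 T) t) →
      (∀ t ∈ Set.Icc 0 T, HasDerivWithinAt y₁ (y₂ t) (Set.Icc 0 T) t) →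
      ContinuousOn y₂ (Set.Icc 0 T) →
      (∀ t ∈ Set.Icc 0 T, c₀ ≤ y₁ t) →
      (∀ t ∈ Set.Icc 0 T, 0 < y t) →
      (∀ t ∈ Set.Icc 0 T, (y₁ t) ^ 2 ≤
        (((N : ℝ) - 2) / ((N : ℝ) - 1)) * y t * (y₂ t + C₁ / T)) →
      ∀ t ∈ Set.Icc 0 (T / 2), T * y₁ t ≤ C * y 0 := by
  have hN3 : (3 : ℝ) ≤ (N : ℝ) := by exact_mod_cast hN
  have h2 : (0 : ℝ) < (N : ℝ) - 2 := by linarith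
  have h1 : (0 : ℝ) < (N : ℝ) - 1 := by linarith
  set α : ℝ := ((N : ℝ) - 1) / ((N : ℝ) - 2) with hα
  have hα1 : 1 < α := (one_lt_div h2).2 (by linarith)
  have hαm : (α - 1) * ((N : ℝ) - 2) = 1 := by rw [hα, sub_mul, div_mul_cancel₀ _ h2.ne']; ring
  set K : ℝ := C₁ / c₀ with hK
  have hK0 : 0 < K := div_pos hC₁ hc₀
  set M : ℝ := 2 * ((N : ℝ) - 2) * Real.exp K with hM
  have hM0 : 0 < M := by positivity
  clear_value K M
  refine ⟨M * Real.exp (M / 2), by positivity, ?_⟩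
  intro T hT y y₁ y₂ hy hy₁ hy₂c hc hpos hineq
  set L : ℝ := C₁ / (T * c₀) with hL
  have hL0 : 0 < L := by positivity
  have hLT : L * T = K := by rw [hL, hK]; field_simp
  clear_value L
  -- continuity
  have hyc : ContinuousOn y (Icc 0 T) := fun s hs => (hy s hs).continuousWithinAt
  have hy₁c : ContinuousOn y₁ (Icc 0 T) := fun s hs => (hy₁ s hs).continuousWithinAt
  have hy₁pos : ∀ s ∈ Icc (0:ℝ) T, 0 < y₁ s := fun s hs => lt_of_lt_of_le hc₀ (hc s hs)
  -- the rescaled hypothesis : α * y₁² ≤ y * (y₂ + C₁/T)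
  have hineq' : ∀ s ∈ Icc (0:ℝ) T, α * (y₁ s) ^ 2 ≤ y s * (y₂ s + C₁ / T) := by
    intro s hs
    have h := hineq s hs
    have hα0 : 0 < α := by linarith
    have key : α * (((N : ℝ) - 2) / ((N : ℝ) - 1)) = 1 := by field_simp [hα]; rw [hα, div_mul_cancel₀ _ h2.ne']
    calc α * (y₁ s) ^ 2
        ≤ α * (((N : ℝ) - 2) / ((N : ℝ) - 1) * y s * (y₂ s + C₁ / T)) :=
          mul_le_mul_of_nonneg_left h (le_of_lt hα0)
      _ = (α * (((N : ℝ) - 2) / ((N : ℝ) - 1))) * (y s * (y₂ s + C₁ / T)) := by ring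
      _ = y s * (y₂ s + C₁ / T) := by rw [key]; ring
  -- Step 1 : monotonicity of h s = exp (L s) * (y₁ s * y s ^ (-α))
  set g : ℝ → ℝ := fun s => y₁ s * y s ^ (-α) with hg
  have hgpos : ∀ s ∈ Icc (0:ℝ) T, 0 < g s := fun s hs =>
    mul_pos (hy₁pos s hs) (Real.rpow_pos_of_pos (hpos s hs) _)
  set h : ℝ → ℝ := fun s => Real.exp (L * s) * g s with hh
  have hcont : ContinuousOn h (Icc 0 T) := by
    apply ContinuousOn.mul
    · exact (Real.continuous_exp.comp (continuous_const.mul continuous_id)).continuousOn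
    · exact hy₁c.mul (hyc.rpow_const (fun s hs => Or.inl (hpos s hs).ne'))
  have hmono : MonotoneOn h (Icc 0 T) := by
    apply monotoneOn_of_hasDerivWithinAt_nonneg (convex_Icc 0 T) hcont
      (f' := fun s => Real.exp (L * s) * (L * 1) * g s +
        Real.exp (L * s) * (y₂ s * y s ^ (-α) + y₁ s * (y₁ s * (-α) * y s ^ (-α - 1))))
    · intro s hs
      rw [interior_Icc] at hs ⊢
      have hs' : s ∈ Icc (0:ℝ) T := Ioo_subset_Icc_self hs
      have dE : HasDerivWithinAt (fun u => Real.exp (L * u)) (Real.exp (L * s) * (L * 1))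
          (Ioo 0 T) s := ((hasDerivWithinAt_id s _).const_mul L).exp
      have dpow : HasDerivWithinAt (fun u => y u ^ (-α)) (y₁ s * (-α) * y s ^ (-α - 1))
          (Ioo 0 T) s :=
        ((hy s hs').mono Ioo_subset_Icc_self).rpow_const (Or.inl (hpos s hs').ne')
      exact dE.mul (((hy₁ s hs').mono Ioo_subset_Icc_self).mul dpow)
    · intro s hs
      rw [interior_Icc] at hs
      have hs' : s ∈ Icc (0:ℝ) T := Ioo_subset_Icc_self hs
      have hys := hpos s hs'
      have hpow : y s ^ (-α) = y s ^ (-α - 1) * y s := by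
        have hr := Real.rpow_add hys (-α - 1) 1
        rw [Real.rpow_one] at hr
        rw [← hr]; norm_num
      have hB : (0:ℝ) < y s ^ (-α - 1) := Real.rpow_pos_of_pos hys _
      have hE : (0:ℝ) < Real.exp (L * s) := Real.exp_pos _
      have h1' := hineq' s hs'
      have h2' : C₁ / T ≤ L * y₁ s := by
        have : L * c₀ = C₁ / T := by field_simp [hL]; rw [hL, div_mul_eq_mul_div, div_mul_eq_mul_div, div_eq_iff (by positivity)]; ring
        nlinarith [hc s hs']
      simp only [hg, hpow]
      nlinarith [mul_le_mul_of_nonneg_left h1' hB.le,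
        mul_le_mul_of_nonneg_left (mul_le_mul_of_nonneg_left h2' hys.le) hB.le,
        mul_pos hE hB]
  -- Step 1 consequence
  have step1 : ∀ t ∈ Icc (0:ℝ) T, ∀ s ∈ Icc (0:ℝ) T, t ≤ s →
      Real.exp (-K) * g t ≤ g s := by
    intro t ht s hs hts
    have hhts := hmono ht hs hts
    have hEs : (0:ℝ) < Real.exp (L * s) := Real.exp_pos _
    have hELs : Real.exp (L * t) * g t ≤ Real.exp (L * s) * g s := hhts
    have hexp : Real.exp (-K) ≤ Real.exp (L * t - L * s) := by
      apply Real.exp_le_exp.2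
      have : L * (s - t) ≤ L * T := by
        apply mul_le_mul_of_nonneg_left _ hL0.le
        have := ht.1; have := hs.2; linarith
      rw [hLT] at this; linarith
    have hge : Real.exp (L * t - L * s) * g t ≤ g s := by
      rw [Real.exp_sub, div_mul_eq_mul_div, div_le_iff₀ hEs]
      linarith [hELs]
    exact le_trans (mul_le_mul_of_nonneg_right hexp (hgpos t ht).le) hge
  -- Step 2 : T * y₁ t ≤ M * y t on [0, T/2]
  have key : ∀ t ∈ Icc (0:ℝ) (T / 2), T * y₁ t ≤ M * y t := by
    intro t ht
    have ht0 : 0 ≤ t := ht.1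
    have htT2 : t ≤ T / 2 := ht.2
    have htT : t ≤ T := by linarith
    have ht' : t ∈ Icc (0:ℝ) T := ⟨ht0, htT⟩
    set c : ℝ := (α - 1) * (Real.exp (-K) * g t) with hcdef
    have hsub : Icc t T ⊆ Icc (0:ℝ) T := Icc_subset_Icc ht0 le_rfl
    have hφanti : AntitoneOn (fun s => y s ^ (1 - α) + c * s) (Icc t T) := by
      apply antitoneOn_of_hasDerivWithinAt_nonpos (convex_Icc t T)
        (f' := fun s => y₁ s * (1 - α) * y s ^ (1 - α - 1) + c * 1)
      · apply ContinuousOn.add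
        · exact (hyc.mono hsub).rpow_const (fun s hs => Or.inl (hpos s (hsub hs)).ne')
        · exact (continuous_const.mul continuous_id).continuousOn
      · intro s hs
        rw [interior_Icc] at hs ⊢
        have hs' : s ∈ Icc (0:ℝ) T := hsub (Ioo_subset_Icc_self hs)
        have dpow : HasDerivWithinAt (fun u => y u ^ (1 - α)) (y₁ s * (1 - α) * y s ^ (1 - α - 1))
            (Ioo t T) s :=
          ((hy s hs').mono (fun x hx => hsub (Ioo_subset_Icc_self hx))).rpow_const
            (Or.inl (hpos s hs').ne')
        exact dpow.add ((hasDerivWithinAt_id s _).const_mul c)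
      · intro s hs
        rw [interior_Icc] at hs
        have hsmem : s ∈ Icc t T := Ioo_subset_Icc_self hs
        have hs' : s ∈ Icc (0:ℝ) T := hsub hsmem
        have h1s := step1 t ht' s hs' hsmem.1
        have hrw : y s ^ (1 - α - 1) = y s ^ (-α) := by norm_num
        rw [hrw]
        have hthis : (α - 1) * (Real.exp (-K) * (y₁ t * y t ^ (-α)))
            ≤ (α - 1) * (y₁ s * y s ^ (-α)) := by
          have h' : (α - 1) * (Real.exp (-K) * g t) ≤ (α - 1) * g s :=
            mul_le_mul_of_nonneg_left h1s (by linarith)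
          simpa [hg] using h'
        calc y₁ s * (1 - α) * y s ^ (-α) + c * 1
            = (α - 1) * (Real.exp (-K) * (y₁ t * y t ^ (-α)))
              - (α - 1) * (y₁ s * y s ^ (-α)) := by
              simp only [hcdef, hg]; ring
          _ ≤ 0 := by linarith
    have hTm : T ∈ Icc t T := ⟨htT, le_rfl⟩
    have htm : t ∈ Icc t T := ⟨le_rfl, htT⟩
    have hφ := hφanti htm hTm htT
    simp only at hφ
    -- y T ^ (1-α) + c T ≤ y t ^ (1-α) + c t, and y T ^ (1-α) > 0
    have hyT : (0:ℝ) < y T ^ (1 - α) := Real.rpow_pos_of_pos (hpos T ⟨le_of_lt hT, le_rfl⟩) _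
    have hi : c * (T - t) ≤ y t ^ (1 - α) := by nlinarith
    -- multiply by y t ^ α
    have hyta : (0:ℝ) < y t ^ α := Real.rpow_pos_of_pos (hpos t ht') _
    have hmul := mul_le_mul_of_nonneg_right hi hyta.le
    have e1 : y t ^ (1 - α) * y t ^ α = y t := by
      rw [← Real.rpow_add (hpos t ht')]; norm_num
    have e2 : y t ^ (-α) * y t ^ α = 1 := by
      rw [← Real.rpow_add (hpos t ht')]; norm_num
    have hfin : (α - 1) * (Real.exp (-K) * y₁ t) * (T - t) ≤ y t := by
      calc (α - 1) * (Real.exp (-K) * y₁ t) * (T - t)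
          = c * (T - t) * y t ^ α - (α - 1) * Real.exp (-K) * y₁ t * (T - t) *
            (y t ^ (-α) * y t ^ α - 1) := by simp only [hcdef, hg]; ring
        _ = c * (T - t) * y t ^ α := by rw [e2]; ring
        _ ≤ y t ^ (1 - α) * y t ^ α := mul_le_mul_of_nonneg_right hi hyta.le
        _ = y t := e1
    -- conclude T y₁ t ≤ M y t
    have hEK : Real.exp (-K) * Real.exp K = 1 := by
      rw [← Real.exp_add]; norm_num
    have hy₁t := hy₁pos t ht'
    have hTt2 : T / 2 ≤ T - t := by linarith
    have h3 : (α - 1) * (Real.exp (-K) * y₁ t) * (T / 2) ≤ y t := by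
      have hnn : 0 ≤ (α - 1) * (Real.exp (-K) * y₁ t) :=
        mul_nonneg (by linarith) (mul_nonneg (Real.exp_pos _).le hy₁t.le)
      exact le_trans (mul_le_mul_of_nonneg_left hTt2 hnn) hfin
    -- multiply h3 by 2 (N-2) exp K
    have hpos2 : (0:ℝ) < 2 * ((N : ℝ) - 2) * Real.exp K := by positivity
    have := mul_le_mul_of_nonneg_left h3 hpos2.le
    calc T * y₁ t = (2 * ((N : ℝ) - 2) * Real.exp K) *
          ((α - 1) * (Real.exp (-K) * y₁ t) * (T / 2)) -
          T * y₁ t * (((α - 1) * ((N:ℝ) - 2)) * (Real.exp (-K) * Real.exp K) - 1) := by ring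
      _ = (2 * ((N : ℝ) - 2) * Real.exp K) *
          ((α - 1) * (Real.exp (-K) * y₁ t) * (T / 2)) := by rw [hαm, hEK]; ring
      _ ≤ (2 * ((N : ℝ) - 2) * Real.exp K) * y t := this
      _ = M * y t := by rw [hM]
  -- Step 3 : Gronwall on [0, T/2]
  intro t ht
  have hsub2 : Icc (0:ℝ) (T / 2) ⊆ Icc (0:ℝ) T := Icc_subset_Icc le_rfl (by linarith)
  have hψanti : AntitoneOn (fun s => Real.exp (-(M / T) * s) * y s) (Icc 0 (T / 2)) := by
    apply antitoneOn_of_hasDerivWithinAt_nonpos (convex_Icc 0 (T / 2))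
      (f' := fun s => Real.exp (-(M / T) * s) * (-(M / T) * 1) * y s +
        Real.exp (-(M / T) * s) * y₁ s)
    · exact ((Real.continuous_exp.comp (continuous_const.mul continuous_id)).continuousOn).mul
        (hyc.mono hsub2)
    · intro s hs
      rw [interior_Icc] at hs ⊢
      have hs' : s ∈ Icc (0:ℝ) T := hsub2 (Ioo_subset_Icc_self hs)
      have dE : HasDerivWithinAt (fun u => Real.exp (-(M / T) * u))
          (Real.exp (-(M / T) * s) * (-(M / T) * 1)) (Ioo 0 (T / 2)) s :=
        ((hasDerivWithinAt_id s _).const_mul (-(M / T))).exp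
      exact dE.mul ((hy s hs').mono (fun x hx => hsub2 (Ioo_subset_Icc_self hx)))
    · intro s hs
      rw [interior_Icc] at hs
      have hsmem : s ∈ Icc (0:ℝ) (T / 2) := Ioo_subset_Icc_self hs
      have hk := key s hsmem
      have hE : (0:ℝ) < Real.exp (-(M / T) * s) := Real.exp_pos _
      have hle : y₁ s ≤ M / T * y s := by
        rw [div_mul_eq_mul_div, le_div_iff₀ hT]; nlinarith
      calc Real.exp (-(M / T) * s) * (-(M / T) * 1) * y s + Real.exp (-(M / T) * s) * y₁ s
          = Real.exp (-(M / T) * s) * (y₁ s - M / T * y s) := by ring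
        _ ≤ Real.exp (-(M / T) * s) * 0 :=
            mul_le_mul_of_nonneg_left (by linarith) hE.le
        _ = 0 := mul_zero _
  have h0m : (0:ℝ) ∈ Icc (0:ℝ) (T / 2) := ⟨le_rfl, by linarith⟩
  have hψ := hψanti h0m ht ht.1
  simp only [mul_zero, Real.exp_zero, one_mul] at hψ
  -- y t ≤ exp ((M/T) t) * y 0 ≤ exp (M/2) * y 0
  have hEt : (0:ℝ) < Real.exp (-(M / T) * t) := Real.exp_pos _
  have hy0 : 0 < y 0 := hpos 0 ⟨le_rfl, hT.le⟩
  have hyt : y t ≤ Real.exp (M / T * t) * y 0 := by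
    have he : Real.exp (M / T * t) * Real.exp (-(M / T) * t) = 1 := by
      rw [← Real.exp_add]; ring_nf; exact Real.exp_zero
    calc y t = Real.exp (M / T * t) * (Real.exp (-(M / T) * t) * y t) -
          y t * (Real.exp (M / T * t) * Real.exp (-(M / T) * t) - 1) := by ring
      _ = Real.exp (M / T * t) * (Real.exp (-(M / T) * t) * y t) := by rw [he]; ring
      _ ≤ Real.exp (M / T * t) * y 0 :=
          mul_le_mul_of_nonneg_left hψ (Real.exp_pos _).le
  have hexp2 : Real.exp (M / T * t) ≤ Real.exp (M / 2) := by
    apply Real.exp_le_exp.2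
    have : M / T * t ≤ M / T * (T / 2) := by
      apply mul_le_mul_of_nonneg_left ht.2 (by positivity)
    calc M / T * t ≤ M / T * (T / 2) := this
      _ = M * (T / T) / 2 := by ring
      _ = M / 2 := by rw [div_self hT.ne', mul_one]
  have hyt2 : y t ≤ Real.exp (M / 2) * y 0 :=
    le_trans hyt (mul_le_mul_of_nonneg_right hexp2 hy0.le)
  have hk := key t ht
  calc T * y₁ t ≤ M * y t := hk
    _ ≤ M * (Real.exp (M / 2) * y 0) := mul_le_mul_of_nonneg_left hyt2 hM0.le
    _ = M * Real.exp (M / 2) * y 0 := by ring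
end

section
/- Let e₀ > 0, c₁ > e₀, C₀ > 0 and t₀ ∈ ℝ. Let β : [t₀,∞) → ℝ be twice differentiable with |β''(t) − e₀²β(t)| ≤ C₀ e^{−c₁ t} for all t ≥ t₀, and β(t) → 0 as t → +∞. Then there exist β₋ ∈ ℝ and C > 0 such that |β(t) − β₋ e^{−e₀ t}| ≤ C e^{−c₁ t} for all t ≥ t₀. -/
open Set Real Filter

lemma aux_drift (t₀ a C : ℝ) (ha : a < 0) (hC : 0 ≤ C) (f f' : ℝ → ℝ)
    (hf : ∀ t ∈ Ici t₀, HasDerivWithinAt f (f' t) (Ici t₀) t)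
    (hb : ∀ t ∈ Ici t₀, |f' t| ≤ C * Real.exp (a * t)) :
    ∃ L : ℝ, ∀ t ∈ Ici t₀, |f t - L| ≤ (C / (-a)) * Real.exp (a * t) := by
  set K : ℝ := C / (-a) with hKdef
  have hK : 0 ≤ K := div_nonneg hC (by linarith)
  have ha0 : a ≠ 0 := ne_of_lt ha
  have hKa : K * a = -C := by rw [hKdef]; rw [div_mul_eq_mul_div, div_eq_iff (neg_ne_zero.mpr ha0)]; ring
  have hexp : ∀ x : ℝ, HasDerivAt (fun t => K * Real.exp (a * t)) (K * a * Real.exp (a * x)) x := by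
    intro x
    have h1 : HasDerivAt (fun t : ℝ => a * t) (a * 1) x := (hasDerivAt_id x).const_mul a
    have h2 := h1.exp.const_mul K
    exact h2.congr_deriv (by ring)
  have hcontf : ContinuousOn f (Ici t₀) := fun t ht => (hf t ht).continuousWithinAt
  -- h₁ = f - K e^{at} is monotone, h₂ = f + K e^{at} is antitone on Ici t₀
  have hmono : MonotoneOn (fun t => f t - K * Real.exp (a * t)) (Ici t₀) := by
    apply monotoneOn_of_hasDerivWithinAt_nonneg (convex_Ici t₀)
      (f' := fun t => f' t - K * a * Real.exp (a * t))
      (hcontf.sub ((Real.continuous_exp.comp (continuous_const.mul continuous_id)).continuousOn.const_smul K))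
    · intro x hx
      rw [interior_Ici] at hx ⊢
      exact (((hf x (Ioi_subset_Ici_self hx)).mono Ioi_subset_Ici_self).sub (hexp x).hasDerivWithinAt)
    · intro x hx
      rw [interior_Ici] at hx
      have := hb x (Ioi_subset_Ici_self hx)
      have h1 : -(C * Real.exp (a * x)) ≤ f' x := neg_le_of_abs_le this
      have h2 : K * a * Real.exp (a * x) = -(C * Real.exp (a * x)) := by rw [hKa]; ring
      linarith
  have hanti : AntitoneOn (fun t => f t + K * Real.exp (a * t)) (Ici t₀) := by
    apply antitoneOn_of_hasDerivWithinAt_nonpos (convex_Ici t₀)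
      (f' := fun t => f' t + K * a * Real.exp (a * t))
      (hcontf.add ((Real.continuous_exp.comp (continuous_const.mul continuous_id)).continuousOn.const_smul K))
    · intro x hx
      rw [interior_Ici] at hx ⊢
      exact (((hf x (Ioi_subset_Ici_self hx)).mono Ioi_subset_Ici_self).add (hexp x).hasDerivWithinAt)
    · intro x hx
      rw [interior_Ici] at hx
      have := hb x (Ioi_subset_Ici_self hx)
      have h1 : f' x ≤ C * Real.exp (a * x) := le_of_abs_le this
      have h2 : K * a * Real.exp (a * x) = -(C * Real.exp (a * x)) := by rw [hKa]; ring
      linarith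
  have h12 : ∀ t, f t - K * Real.exp (a * t) ≤ f t + K * Real.exp (a * t) := by
    intro t
    have := mul_nonneg hK (Real.exp_nonneg (a * t))
    linarith
  set S := (fun t => f t - K * Real.exp (a * t)) '' Ici t₀ with hS
  have hSne : S.Nonempty := ⟨_, mem_image_of_mem _ (self_mem_Ici (a := t₀))⟩
  have hSbdd : BddAbove S := by
    refine ⟨f t₀ + K * Real.exp (a * t₀), ?_⟩
    rintro y ⟨s, hs, rfl⟩
    exact le_trans (h12 s) (hanti self_mem_Ici hs hs)
  refine ⟨sSup S, fun t ht => ?_⟩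
  have hle : f t - K * Real.exp (a * t) ≤ sSup S := le_csSup hSbdd (mem_image_of_mem _ ht)
  have hge : sSup S ≤ f t + K * Real.exp (a * t) := by
    apply csSup_le hSne
    rintro y ⟨s, hs, rfl⟩
    rcases le_total s t with h | h
    · exact le_trans (hmono hs ht h) (h12 t)
    · exact le_trans (h12 s) (hanti ht hs h)
  rw [abs_sub_le_iff]
  constructor <;> linarith

lemma exp_mul_exp (a b t : ℝ) : Real.exp (a * t) * Real.exp (b * t) = Real.exp ((a + b) * t) := by
  rw [← Real.exp_add]; ring_nf

/-- if `β'' = e₀²β + O(e^{-c₁t})` with `c₁ > e₀ > 0` and `β(t) → 0` at `+∞`,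
then `β(t) = β₋ e^{-e₀t} + O(e^{-c₁t})` for some `β₋ ∈ ℝ`. -/
theorem stmt15 (e₀ c₁ C₀ t₀ : ℝ) (he₀ : 0 < e₀) (hc₁ : e₀ < c₁) (hC₀ : 0 < C₀)
    (β β₁ β₂ : ℝ → ℝ)
    (hβ : ∀ t ∈ Set.Ici t₀, HasDerivWithinAt β (β₁ t) (Set.Ici t₀) t)
    (hβ₁ : ∀ t ∈ Set.Ici t₀, HasDerivWithinAt β₁ (β₂ t) (Set.Ici t₀) t)
    (hineq : ∀ t ∈ Set.Ici t₀, |β₂ t - e₀ ^ 2 * β t| ≤ C₀ * Real.exp (-c₁ * t))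
    (hlim : Filter.Tendsto β Filter.atTop (nhds 0)) :
    ∃ (βm : ℝ) (C : ℝ), 0 < C ∧
      ∀ t ∈ Set.Ici t₀, |β t - βm * Real.exp (-e₀ * t)| ≤ C * Real.exp (-c₁ * t) := by
  -- Step A: g = e^{e₀ t}(β₁ - e₀ β)
  set g : ℝ → ℝ := fun t => Real.exp (e₀ * t) * (β₁ t - e₀ * β t) with hgdef
  have hg : ∀ t ∈ Set.Ici t₀,
      HasDerivWithinAt g (Real.exp (e₀ * t) * (β₂ t - e₀ ^ 2 * β t)) (Set.Ici t₀) t := by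
    intro t ht
    have hexp : HasDerivWithinAt (fun s => Real.exp (e₀ * s)) (Real.exp (e₀ * t) * (e₀ * 1))
        (Set.Ici t₀) t := (((hasDerivAt_id t).const_mul e₀).exp).hasDerivWithinAt
    have := hexp.mul ((hβ₁ t ht).sub ((hβ t ht).const_mul e₀))
    exact this.congr_deriv (by simp only [Pi.sub_apply]; ring)
  have hgb : ∀ t ∈ Set.Ici t₀,
      |Real.exp (e₀ * t) * (β₂ t - e₀ ^ 2 * β t)| ≤ C₀ * Real.exp ((e₀ - c₁) * t) := by
    intro t ht
    rw [abs_mul, abs_of_pos (Real.exp_pos _)]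
    calc Real.exp (e₀ * t) * |β₂ t - e₀ ^ 2 * β t|
        ≤ Real.exp (e₀ * t) * (C₀ * Real.exp (-c₁ * t)) := by
          exact mul_le_mul_of_nonneg_left (hineq t ht) (Real.exp_nonneg _)
      _ = C₀ * Real.exp ((e₀ - c₁) * t) := by
          rw [mul_comm (Real.exp (e₀ * t)), mul_assoc, exp_mul_exp]
          ring_nf
  obtain ⟨L, hL⟩ := aux_drift t₀ (e₀ - c₁) C₀ (by linarith) (le_of_lt hC₀) g _ hg hgb
  set K : ℝ := C₀ / -(e₀ - c₁) with hKdef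
  have hKpos : 0 < K := div_pos hC₀ (by linarith)
  -- Step B: W = e^{-e₀ t} β + c e^{-2e₀ t}, with 2 e₀ c = L
  obtain ⟨c, hc⟩ : ∃ c : ℝ, 2 * e₀ * c = L :=
    ⟨L / (2 * e₀), by field_simp⟩
  set W : ℝ → ℝ := fun t => Real.exp (-e₀ * t) * β t + c * Real.exp (-(2 * e₀) * t) with hWdef
  have hW : ∀ t ∈ Set.Ici t₀,
      HasDerivWithinAt W (Real.exp (-(2 * e₀) * t) * (g t - L)) (Set.Ici t₀) t := by
    intro t ht
    have hexp1 : HasDerivWithinAt (fun s => Real.exp (-e₀ * s)) (Real.exp (-e₀ * t) * (-e₀ * 1))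
        (Set.Ici t₀) t := (((hasDerivAt_id t).const_mul (-e₀)).exp).hasDerivWithinAt
    have hexp2 : HasDerivWithinAt (fun s => Real.exp (-(2 * e₀) * s))
        (Real.exp (-(2 * e₀) * t) * (-(2 * e₀) * 1)) (Set.Ici t₀) t :=
      (((hasDerivAt_id t).const_mul (-(2 * e₀))).exp).hasDerivWithinAt
    have := (hexp1.mul (hβ t ht)).add (hexp2.const_mul c)
    refine this.congr_deriv (Eq.symm ?_)
    have h2 : Real.exp (-(2 * e₀) * t) * Real.exp (e₀ * t) = Real.exp (-e₀ * t) := by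
      rw [exp_mul_exp]; ring_nf
    rw [hgdef]
    linear_combination (β₁ t - e₀ * β t) * h2 + Real.exp (-(2 * e₀) * t) * hc
  have hWb : ∀ t ∈ Set.Ici t₀,
      |Real.exp (-(2 * e₀) * t) * (g t - L)| ≤ K * Real.exp (-(e₀ + c₁) * t) := by
    intro t ht
    rw [abs_mul, abs_of_pos (Real.exp_pos _)]
    calc Real.exp (-(2 * e₀) * t) * |g t - L|
        ≤ Real.exp (-(2 * e₀) * t) * (K * Real.exp ((e₀ - c₁) * t)) :=
          mul_le_mul_of_nonneg_left (hL t ht) (Real.exp_nonneg _)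
      _ = K * Real.exp (-(e₀ + c₁) * t) := by
          rw [mul_comm (Real.exp (-(2 * e₀) * t)), mul_assoc, exp_mul_exp]
          ring_nf
  obtain ⟨M, hM⟩ := aux_drift t₀ (-(e₀ + c₁)) K (by linarith) (le_of_lt hKpos) W _ hW hWb
  set K₂ : ℝ := K / -(-(e₀ + c₁)) with hK₂def
  have hK₂pos : 0 < K₂ := div_pos hKpos (by linarith)
  -- M = 0 since W → 0 at +∞
  have hexp0 : ∀ a : ℝ, a < 0 → Filter.Tendsto (fun t => Real.exp (a * t)) Filter.atTop (nhds 0) := by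
    intro a ha
    rw [Real.tendsto_exp_comp_nhds_zero]
    have h1 : Filter.Tendsto (fun t : ℝ => -a * t) Filter.atTop Filter.atTop :=
      Filter.Tendsto.const_mul_atTop (by linarith) Filter.tendsto_id
    exact (Filter.tendsto_neg_atBot_iff.mpr h1).congr (fun t => by ring)
  have hWlim : Filter.Tendsto W Filter.atTop (nhds 0) := by
    rw [hWdef]
    have h1 : Filter.Tendsto (fun t => Real.exp (-e₀ * t) * β t) Filter.atTop (nhds 0) := by
      have := (hexp0 (-e₀) (by linarith)).mul hlim
      simpa using this
    have h2 : Filter.Tendsto (fun t => c * Real.exp (-(2 * e₀) * t)) Filter.atTop (nhds 0) := by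
      have := (hexp0 (-(2 * e₀)) (by linarith)).const_mul c
      simpa using this
    simpa using h1.add h2
  have hMlim : Filter.Tendsto (fun t => W t - M) Filter.atTop (nhds 0) := by
    apply squeeze_zero_norm' (a := fun t => K₂ * Real.exp (-(e₀ + c₁) * t))
    · filter_upwards [Filter.eventually_ge_atTop t₀] with t ht
      exact hM t ht
    · have := (hexp0 (-(e₀ + c₁)) (by linarith)).const_mul K₂
      simpa using this
  have hM0 : M = 0 := by
    have h1 : Filter.Tendsto (fun t => W t - M) Filter.atTop (nhds (0 - M)) := hWlim.sub_const M
    have := tendsto_nhds_unique h1 hMlim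
    linarith
  -- conclusion
  refine ⟨-c, K₂, hK₂pos, fun t ht => ?_⟩
  have key : β t - -c * Real.exp (-e₀ * t) = Real.exp (e₀ * t) * W t := by
    rw [hWdef]
    have h1 : Real.exp (e₀ * t) * Real.exp (-e₀ * t) = 1 := by
      rw [exp_mul_exp]; simp
    have h2 : Real.exp (e₀ * t) * Real.exp (-(2 * e₀) * t) = Real.exp (-e₀ * t) := by
      rw [exp_mul_exp]; ring_nf
    linear_combination (-(β t)) * h1 + (-c) * h2
  rw [key, abs_mul, abs_of_pos (Real.exp_pos _)]
  calc Real.exp (e₀ * t) * |W t|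
      ≤ Real.exp (e₀ * t) * (K₂ * Real.exp (-(e₀ + c₁) * t)) := by
        have := hM t ht
        rw [hM0, sub_zero] at this
        exact mul_le_mul_of_nonneg_left this (Real.exp_nonneg _)
    _ = K₂ * Real.exp (-c₁ * t) := by
        rw [mul_comm (Real.exp (e₀ * t)), mul_assoc, exp_mul_exp]
        ring_nf
end
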